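/- arXiv:2206.02185 — 6 statements merged into one kernel-verified Lean document; each statement's English description precedes it below -/
import Mathlib

section
/- Let F be a finite family of sets such that for every nonempty subfamily F' of F there exists a set F' ∈ F' whose closed neighbourhood in F' (the sets of F' intersecting it, including itself) can be hit by at most t points. Then the minimum hitting set of F has size at most t times the maximum packing (pairwise disjoint subfamily) of F, i.e., τ(F) ≤ t·ν(F). -/
open Classical MeasureTheory
noncomputable section

/-- Points of the Euclidean plane. -/
abbrev Pt := EuclideanSpace ℝ (Fin 2)

/-- A finite point set `H` hits every member of the family `F`. -/
def Hits (H : Finset Pt) (F : Finset (Set Pt)) : Prop := ∀ S ∈ F, ∃ p ∈ H, p ∈ S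

/-- The hitting number τ of a family. -/
def hitNum (F : Finset (Set Pt)) : ℕ := sInf {n | ∃ H : Finset Pt, H.card = n ∧ Hits H F}

/-- The packing number ν of a family. -/
def packNum (F : Finset (Set Pt)) : ℕ :=
  sSup {n | ∃ P ⊆ F, P.card = n ∧ (P : Set (Set Pt)).Pairwise Disjoint}

/-- The maximum degree Δ of a family: the maximum number of members containing a common point. -/
def maxDeg (F : Finset (Set Pt)) : ℕ :=
  sSup {n | ∃ p : Pt, (F.filter fun S => p ∈ S).card = n}

/-- The chromatic number χ of the intersection graph of a family. -/
def chromNum (F : Finset (Set Pt)) : ℕ :=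
  sInf {n | ∃ col : Set Pt → ℕ, (∀ S ∈ F, col S < n) ∧
    ∀ S ∈ F, ∀ T ∈ F, S ≠ T → (S ∩ T).Nonempty → col S ≠ col T}

/-- Hitting-`t`-degeneracy: every nonempty subfamily has a member whose closed
neighbourhood within the subfamily can be hit by at most `t` points. -/
def HitDeg (t : ℕ) (F : Finset (Set Pt)) : Prop :=
  ∀ F' ⊆ F, F'.Nonempty → ∃ S ∈ F',
    hitNum (F'.filter fun T => (T ∩ S).Nonempty) ≤ t

/-- `D`-degeneracy of a family: every nonempty subfamily has a member intersecting
at most `D` other members of the subfamily. -/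
def FamDeg (D : ℕ) (F : Finset (Set Pt)) : Prop :=
  ∀ F' ⊆ F, F'.Nonempty → ∃ S ∈ F',
    (F'.filter fun T => T ≠ S ∧ (T ∩ S).Nonempty).card ≤ D

/-!
Greedy argument: pick `S` whose closed neighbourhood is hit by `t` points and remove that
neighbourhood. Every member of the remaining family `R` is disjoint from `S`, so adding `S` to
a packing of `R` gives a packing of `F`: `ν(R) + 1 ≤ ν(F)`. By induction `τ(R) ≤ t ν(R)`,
hence `τ(F) ≤ t + τ(R) ≤ t ν(F)`.
-/

section Hitting

variable {H K : Finset Pt} {A B : Finset (Set Pt)}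

lemma Hits.mono (hH : Hits H A) (hBA : B ⊆ A) : Hits H B :=
  fun S hS => hH S (hBA hS)

lemma Hits.union (hH : Hits H A) (hK : Hits K B) : Hits (H ∪ K) (A ∪ B) := by
  intro S hS
  rcases Finset.mem_union.mp hS with hSA | hSB
  · obtain ⟨p, hpH, hpS⟩ := hH S hSA
    exact ⟨p, Finset.mem_union_left K hpH, hpS⟩
  · obtain ⟨p, hpK, hpS⟩ := hK S hSB
    exact ⟨p, Finset.mem_union_right H hpK, hpS⟩

lemma hitNum_le_card (hH : Hits H A) : hitNum A ≤ H.card :=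
  Nat.sInf_le ⟨H, rfl, hH⟩

lemma exists_hits_card_eq_hitNum (hA : ∃ H, Hits H A) :
    ∃ H, H.card = hitNum A ∧ Hits H A := by
  obtain ⟨H, hH⟩ := hA
  have hne : {n | ∃ H : Finset Pt, H.card = n ∧ Hits H A}.Nonempty := ⟨H.card, H, rfl, hH⟩
  exact Nat.sInf_mem hne

lemma hitNum_eq_zero_of_not_exists_hits (hA : ¬∃ H, Hits H A) : hitNum A = 0 := by
  have hempty : {n | ∃ H : Finset Pt, H.card = n ∧ Hits H A} = ∅ :=
    Set.eq_empty_of_forall_notMem fun _ hn => hA (hn.imp fun _ => And.right)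
  rw [hitNum, hempty, Nat.sInf_empty]

lemma hitNum_eq_zero_of_empty_mem (hA : ∅ ∈ A) : hitNum A = 0 :=
  hitNum_eq_zero_of_not_exists_hits fun ⟨H, hH⟩ => by
    obtain ⟨_, _, hp⟩ := hH ∅ hA
    exact hp

/-- Holds without any nonemptiness assumption because of the junk value `hitNum A = 0` for a
family with no hitting set. -/
lemma hitNum_union_le (A B : Finset (Set Pt)) : hitNum (A ∪ B) ≤ hitNum A + hitNum B := by
  by_cases hA : ∃ H, Hits H A
  · by_cases hB : ∃ K, Hits K B
    · obtain ⟨H, hHcard, hH⟩ := exists_hits_card_eq_hitNum hA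
      obtain ⟨K, hKcard, hK⟩ := exists_hits_card_eq_hitNum hB
      calc hitNum (A ∪ B) ≤ (H ∪ K).card := hitNum_le_card (hH.union hK)
        _ ≤ H.card + K.card := Finset.card_union_le H K
        _ = hitNum A + hitNum B := by rw [hHcard, hKcard]
    · rw [hitNum_eq_zero_of_not_exists_hits fun ⟨K, hK⟩ =>
        hB ⟨K, hK.mono Finset.subset_union_right⟩]
      exact Nat.zero_le _
  · rw [hitNum_eq_zero_of_not_exists_hits fun ⟨H, hH⟩ =>
      hA ⟨H, hH.mono Finset.subset_union_left⟩]
    exact Nat.zero_le _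

end Hitting

section Packing

lemma bddAbove_packings (F : Finset (Set Pt)) :
    BddAbove {n | ∃ P ⊆ F, P.card = n ∧ (P : Set (Set Pt)).Pairwise Disjoint} :=
  ⟨F.card, by
    rintro _ ⟨P, hPF, rfl, -⟩
    exact Finset.card_le_card hPF⟩

lemma card_le_packNum {F P : Finset (Set Pt)} (hPF : P ⊆ F)
    (hP : (P : Set (Set Pt)).Pairwise Disjoint) : P.card ≤ packNum F :=
  le_csSup (bddAbove_packings F) ⟨P, hPF, rfl, hP⟩

lemma exists_packing_card_eq_packNum (F : Finset (Set Pt)) :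
    ∃ P ⊆ F, P.card = packNum F ∧ (P : Set (Set Pt)).Pairwise Disjoint := by
  refine Nat.sSup_mem ?_ (bddAbove_packings F)
  exact ⟨0, ∅, Finset.empty_subset F, rfl, by simp⟩

lemma packNum_add_one_le_of_disjoint {F G : Finset (Set Pt)} {S : Set Pt} (hSF : S ∈ F)
    (hS : S.Nonempty) (hGF : G ⊆ F) (hGS : ∀ T ∈ G, Disjoint T S) :
    packNum G + 1 ≤ packNum F := by
  obtain ⟨P, hPG, hPcard, hP⟩ := exists_packing_card_eq_packNum G
  have hSP : S ∉ P := fun hSP => hS.ne_empty (disjoint_self.mp (hGS S (hPG hSP)))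
  have hinsert : ((insert S P : Finset (Set Pt)) : Set (Set Pt)).Pairwise Disjoint := by
    rw [Finset.coe_insert, Set.pairwise_insert_of_symm]
    exact ⟨hP, fun T hTP _ => (hGS T (hPG hTP)).symm⟩
  calc packNum G + 1 = (insert S P).card := by rw [Finset.card_insert_of_notMem hSP, hPcard]
    _ ≤ packNum F := card_le_packNum (Finset.insert_subset hSF (hPG.trans hGF)) hinsert

end Packing

lemma HitDeg.mono {t : ℕ} {F G : Finset (Set Pt)} (hF : HitDeg t F) (hGF : G ⊆ F) :
    HitDeg t G :=
  fun F' hF'G hF' => hF F' (hF'G.trans hGF) hF'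

theorem stmt_0 (t : ℕ) (F : Finset (Set Pt)) (h : HitDeg t F) :
    hitNum F ≤ t * packNum F := by
  induction F using Finset.strongInduction with
  | H F ih =>
  rcases F.eq_empty_or_nonempty with rfl | hne
  · exact (hitNum_le_card (H := ∅) (by simp [Hits])).trans (Nat.zero_le _)
  obtain ⟨S, hSF, hSt⟩ := h F subset_rfl hne
  rcases S.eq_empty_or_nonempty with rfl | hS
  · rw [hitNum_eq_zero_of_empty_mem hSF]
    exact Nat.zero_le _
  set R := F.filter fun T => ¬(T ∩ S).Nonempty
  have hR_ssub : R ⊂ F :=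
    Finset.filter_ssubset.mpr ⟨S, hSF, not_not.mpr (by rwa [Set.inter_self])⟩
  have hR_disj : ∀ T ∈ R, Disjoint T S := fun T hT =>
    Set.disjoint_iff_inter_eq_empty.mpr
      (Set.not_nonempty_iff_eq_empty.mp (Finset.mem_filter.mp hT).2)
  calc hitNum F
      = hitNum ((F.filter fun T => (T ∩ S).Nonempty) ∪ R) := by
        rw [Finset.filter_union_filter_not_eq]
    _ ≤ t + t * packNum R := (hitNum_union_le _ _).trans
        (add_le_add hSt (ih R hR_ssub (h.mono hR_ssub.subset)))
    _ = t * (packNum R + 1) := by ring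
    _ ≤ t * packNum F := Nat.mul_le_mul_left t
        (packNum_add_one_le_of_disjoint hSF hS hR_ssub.subset hR_disj)
end
end

section
/- Let a, b, c ∈ ℝ² be three points with pairwise Euclidean distances at most 1. Then every square C in the plane (not necessarily axis-parallel) with side length at least 1 whose centre lies in the triangle conv{a,b,c} contains at least one of the points a, b, c. -/
open Classical MeasureTheory
noncomputable section

/-- First coordinate of `x - c` in the rotated (by `θ`) orthonormal frame. -/
def sqForm1 (c : Pt) (θ : ℝ) (x : Pt) : ℝ :=
  Real.cos θ * (x 0 - c 0) + Real.sin θ * (x 1 - c 1)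

/-- Second coordinate of `x - c` in the rotated (by `θ`) orthonormal frame. -/
def sqForm2 (c : Pt) (θ : ℝ) (x : Pt) : ℝ :=
  Real.sin θ * (x 0 - c 0) - Real.cos θ * (x 1 - c 1)

/-- The (closed, possibly rotated) square with centre `c`, rotation angle `θ` and side `s`. -/
def sqSet (c : Pt) (θ s : ℝ) : Set Pt :=
  {x | |sqForm1 c θ x| ≤ s / 2 ∧ |sqForm2 c θ x| ≤ s / 2}

/-- The four vertices of the square with centre `c`, angle `θ` and side `s`. -/
def sqVertices (c : Pt) (θ s : ℝ) : Set Pt :=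
  {x | |sqForm1 c θ x| = s / 2 ∧ |sqForm2 c θ x| = s / 2}

/-- A set is a (possibly rotated) unit square. -/
def IsUnitSquare (S : Set Pt) : Prop := ∃ c θ, S = sqSet c θ 1

/-- A set is a (possibly rotated) square of some positive side length. -/
def IsSquareSet (S : Set Pt) : Prop := ∃ c θ s, 0 < s ∧ S = sqSet c θ s

set_option maxHeartbeats 4000000 in
private lemma key3_aux (x1 x2 x3 y1 y2 y3 l1 l2 l3 : ℝ)
    (h1 : 0 ≤ l1) (h2 : 0 ≤ l2) (h3 : 0 ≤ l3) (hsum : l1 + l2 + l3 = 1)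
    (hx : l1*x1 + l2*x2 + l3*x3 = 0) (hy : l1*y1 + l2*y2 + l3*y3 = 0)
    (d12x : |x1 - x2| ≤ 1) (d13x : |x1 - x3| ≤ 1) (d23x : |x2 - x3| ≤ 1)
    (d12y : |y1 - y2| ≤ 1) (d13y : |y1 - y3| ≤ 1) (d23y : |y2 - y3| ≤ 1) :
    (|x1| ≤ 1/2 ∧ |y1| ≤ 1/2) ∨ (|x2| ≤ 1/2 ∧ |y2| ≤ 1/2) ∨ (|x3| ≤ 1/2 ∧ |y3| ≤ 1/2) := by
  obtain ⟨e1, e2⟩ := abs_le.mp d12x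
  obtain ⟨e3, e4⟩ := abs_le.mp d13x
  obtain ⟨e5, e6⟩ := abs_le.mp d23x
  obtain ⟨f1, f2⟩ := abs_le.mp d12y
  obtain ⟨f3, f4⟩ := abs_le.mp d13y
  obtain ⟨f5, f6⟩ := abs_le.mp d23y
  clear d12x d13x d23x d12y d13y d23y
  by_contra h
  simp only [not_or, not_and_or, not_le, lt_abs] at h
  obtain ⟨hA, hB, hC⟩ := h
  rcases hA with (hA|hA)|(hA|hA) <;> rcases hB with (hB|hB)|(hB|hB) <;>
    rcases hC with (hC|hC)|(hC|hC) <;>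
    first
      | linarith
      | nlinarith [mul_nonneg h1 h2, mul_nonneg h1 h3, mul_nonneg h2 h3]

private lemma form1_bound (cen : Pt) (θ : ℝ) (p q : Pt) (h : dist p q ≤ 1) :
    |sqForm1 cen θ p - sqForm1 cen θ q| ≤ 1 := by
  have hd : dist p q = Real.sqrt ((p 0 - q 0)^2 + (p 1 - q 1)^2) := by
    rw [EuclideanSpace.dist_eq, Fin.sum_univ_two]
    simp [Real.dist_eq, sq_abs]
  have h2 : |sqForm1 cen θ p - sqForm1 cen θ q| ≤ dist p q := by
    rw [hd, ← Real.sqrt_sq (abs_nonneg (sqForm1 cen θ p - sqForm1 cen θ q))]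
    apply Real.sqrt_le_sqrt
    rw [sq_abs]
    have := Real.sin_sq_add_cos_sq θ
    simp only [sqForm1]
    nlinarith [sq_nonneg (Real.cos θ * (p 1 - q 1) - Real.sin θ * (p 0 - q 0))]
  linarith

private lemma form2_bound (cen : Pt) (θ : ℝ) (p q : Pt) (h : dist p q ≤ 1) :
    |sqForm2 cen θ p - sqForm2 cen θ q| ≤ 1 := by
  have hd : dist p q = Real.sqrt ((p 0 - q 0)^2 + (p 1 - q 1)^2) := by
    rw [EuclideanSpace.dist_eq, Fin.sum_univ_two]
    simp [Real.dist_eq, sq_abs]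
  have h2 : |sqForm2 cen θ p - sqForm2 cen θ q| ≤ dist p q := by
    rw [hd, ← Real.sqrt_sq (abs_nonneg (sqForm2 cen θ p - sqForm2 cen θ q))]
    apply Real.sqrt_le_sqrt
    rw [sq_abs]
    have := Real.sin_sq_add_cos_sq θ
    simp only [sqForm2]
    nlinarith [sq_nonneg (Real.sin θ * (p 1 - q 1) + Real.cos θ * (p 0 - q 0))]
  linarith

theorem stmt_6 (a b c : Pt) (hab : dist a b ≤ 1) (hac : dist a c ≤ 1) (hbc : dist b c ≤ 1)
    (cen : Pt) (θ s : ℝ) (hs : 1 ≤ s)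
    (hcen : cen ∈ convexHull ℝ ({a, b, c} : Set Pt)) :
    a ∈ sqSet cen θ s ∨ b ∈ sqSet cen θ s ∨ c ∈ sqSet cen θ s := by
  -- extract convex weights
  rw [show ({a, b, c} : Set Pt) = insert a {b, c} from rfl,
      convexHull_insert ⟨b, by simp⟩, convexHull_pair, mem_convexJoin] at hcen
  obtain ⟨a', ha', z, hz, hcz⟩ := hcen
  rw [Set.mem_singleton_iff] at ha'
  rw [ha'] at hcz
  obtain ⟨u, v, hu, hv, huv, hz'⟩ := hz
  obtain ⟨p, q, hp, hq, hpq, hc⟩ := hcz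
  have hco : ∀ i, cen i = p * a i + (q*u) * b i + (q*v) * c i := by
    intro i
    subst hz'
    rw [← hc]
    simp [PiLp.add_apply, PiLp.smul_apply, smul_eq_mul]
    ring
  have hsum : p + q*u + q*v = 1 := by nlinarith
  have hc0 := hco 0
  have hc1 := hco 1
  have hx : p * sqForm1 cen θ a + (q*u) * sqForm1 cen θ b + (q*v) * sqForm1 cen θ c = 0 := by
    simp only [sqForm1]
    linear_combination (-(Real.cos θ * cen 0 + Real.sin θ * cen 1)) * hsum
      - Real.cos θ * hc0 - Real.sin θ * hc1
  have hy : p * sqForm2 cen θ a + (q*u) * sqForm2 cen θ b + (q*v) * sqForm2 cen θ c = 0 := by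
    simp only [sqForm2]
    linear_combination (-(Real.sin θ * cen 0 - Real.cos θ * cen 1)) * hsum
      - Real.sin θ * hc0 + Real.cos θ * hc1
  have key := key3_aux (sqForm1 cen θ a) (sqForm1 cen θ b) (sqForm1 cen θ c)
    (sqForm2 cen θ a) (sqForm2 cen θ b) (sqForm2 cen θ c) p (q*u) (q*v)
    hp (mul_nonneg hq hu) (mul_nonneg hq hv) hsum hx hy
    (form1_bound cen θ a b hab) (form1_bound cen θ a c hac) (form1_bound cen θ b c hbc)
    (form2_bound cen θ a b hab) (form2_bound cen θ a c hac) (form2_bound cen θ b c hbc)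
  have hs2 : (1:ℝ)/2 ≤ s/2 := by linarith
  rcases key with ⟨k1, k2⟩ | ⟨k1, k2⟩ | ⟨k1, k2⟩
  · exact Or.inl ⟨k1.trans hs2, k2.trans hs2⟩
  · exact Or.inr (Or.inl ⟨k1.trans hs2, k2.trans hs2⟩)
  · exact Or.inr (Or.inr ⟨k1.trans hs2, k2.trans hs2⟩)
end
end

section
/- Let a, b be two points on a line L in ℝ², let q be the midpoint of [a,b], and let c be a point not on L. Then there exists a right-angled triangle whose hypotenuse is a closed subsegment of the open segment (a,b) and whose third vertex (with the right angle) is c if and only if dist(c,q) < dist(q,a), i.e., c lies in the open disk with centre q and radius dist(q,a). -/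
open Classical MeasureTheory
noncomputable section

/-!
If `c` sees the chord `[a', b']` at a right angle, then by Thales' theorem `c` lies on the circle
with diameter `[a', b']`; when `a', b'` lie strictly inside `[a, b]` that circle lies inside the
open disk with diameter `[a, b]`. Conversely, if `c` is in that disk at distance `d > 0` from its
centre `q`, the chord of `[a, b]` centred at `q` of length `2 d` is seen from `c` at a right angle.
-/

open AffineMap EuclideanGeometry Metric

theorem inner_sub_sub_eq_zero_iff_dist_midpoint_eq {V : Type*} [NormedAddCommGroup V]
    [InnerProductSpace ℝ V] (a b c : V) :
    inner ℝ (a - c) (b - c) = 0 ↔ dist c (midpoint ℝ a b) = dist a b / 2 := by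
  have thales :=
    Sphere.angle_eq_pi_div_two_iff_mem_sphere_ofDiameter (p₁ := a) (p₂ := c) (p₃ := b)
  rw [EuclideanGeometry.angle, EuclideanGeometry.mem_sphere, vsub_eq_sub, vsub_eq_sub,
    ← InnerProductGeometry.inner_eq_zero_iff_angle_eq_pi_div_two] at thales
  exact thales

section

variable {E : Type*} [NormedAddCommGroup E] [NormedSpace ℝ E]

theorem midpoint_lineMap_lineMap (a b : E) (s t : ℝ) :
    midpoint ℝ (lineMap a b s) (lineMap a b t) = lineMap a b ((s + t) / 2) := by
  rw [← (lineMap a b : ℝ →ᵃ[ℝ] E).map_midpoint, midpoint_eq_smul_add, smul_eq_mul,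
    invOf_eq_inv, inv_mul_eq_div]

theorem dist_midpoint_lineMap_lineMap_midpoint (a b : E) (s t : ℝ) :
    dist (midpoint ℝ (lineMap a b s) (lineMap a b t)) (midpoint ℝ a b) =
      |(s + t - 1) / 2| * dist a b := by
  rw [midpoint_lineMap_lineMap, ← lineMap_one_half (R := ℝ), dist_lineMap_lineMap, Real.dist_eq]
  ring_nf

theorem half_dist_add_dist_midpoint_midpoint_lt {a b a' b' : E} (hab : a ≠ b)
    (ha' : a' ∈ openSegment ℝ a b) (hb' : b' ∈ openSegment ℝ a b) :
    dist a' b' / 2 + dist (midpoint ℝ a' b') (midpoint ℝ a b) < dist a b / 2 := by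
  rw [openSegment_eq_image_lineMap] at ha' hb'
  obtain ⟨s, ⟨hs0, hs1⟩, rfl⟩ := ha'
  obtain ⟨t, ⟨ht0, ht1⟩, rfl⟩ := hb'
  rw [dist_midpoint_lineMap_lineMap_midpoint, dist_lineMap_lineMap, Real.dist_eq, abs_div,
    abs_two]
  have hab' : 0 < dist a b := dist_pos.2 hab
  have key : |s - t| + |s + t - 1| < 1 := by
    rcases abs_cases (s - t) with ⟨h1, _⟩ | ⟨h1, _⟩ <;>
      rcases abs_cases (s + t - 1) with ⟨h2, _⟩ | ⟨h2, _⟩ <;> linarith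
  nlinarith

theorem exists_mem_openSegment_midpoint_eq_dist_eq {a b : E} {r : ℝ} (hr0 : 0 ≤ r)
    (hr : r < dist a b / 2) :
    ∃ a' ∈ openSegment ℝ a b, ∃ b' ∈ openSegment ℝ a b,
      midpoint ℝ a' b' = midpoint ℝ a b ∧ dist a' b' = 2 * r := by
  have hab : 0 < dist a b := by linarith
  set k := r / dist a b
  have hk0 : 0 ≤ k := div_nonneg hr0 hab.le
  have hk : k < 1 / 2 := by rw [div_lt_iff₀ hab]; linarith
  refine ⟨lineMap a b (1 / 2 - k), ?_, lineMap a b (1 / 2 + k), ?_, ?_, ?_⟩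
  · rw [openSegment_eq_image_lineMap]; exact ⟨_, ⟨by linarith, by linarith⟩, rfl⟩
  · rw [openSegment_eq_image_lineMap]; exact ⟨_, ⟨by linarith, by linarith⟩, rfl⟩
  · rw [midpoint_lineMap_lineMap, ← lineMap_one_half (R := ℝ)]; ring_nf
  · rw [dist_lineMap_lineMap, Real.dist_eq, show 1 / 2 - k - (1 / 2 + k) = -(2 * k) by ring,
      abs_neg, abs_of_nonneg (by positivity), mul_assoc, div_mul_cancel₀ r hab.ne']

end

theorem stmt_7 (a b c : Pt) (hab : a ≠ b) (hc : c ∉ affineSpan ℝ ({a, b} : Set Pt)) :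
    (∃ a' b' : Pt, a' ∈ openSegment ℝ a b ∧ b' ∈ openSegment ℝ a b ∧ a' ≠ b' ∧
        (inner ℝ (a' - c) (b' - c) : ℝ) = 0) ↔
      dist c (midpoint ℝ a b) < dist (midpoint ℝ a b) a := by
  simp only [inner_sub_sub_eq_zero_iff_dist_midpoint_eq, dist_midpoint_left (𝕜 := ℝ),
    Real.norm_two, inv_mul_eq_div]
  constructor
  · rintro ⟨a', b', ha', hb', -, hright⟩
    exact closedBall_subset_ball' (half_dist_add_dist_midpoint_midpoint_lt hab ha' hb')
      (mem_closedBall.2 hright.le)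
  · intro hlt
    have hcq : c ≠ midpoint ℝ a b := fun h ↦
      hc (h ▸ lineMap_one_half (R := ℝ) a b ▸ lineMap_mem_affineSpan_pair _ _ _)
    obtain ⟨a', ha', b', hb', hmid, hdist⟩ :=
      exists_mem_openSegment_midpoint_eq_dist_eq dist_nonneg hlt
    refine ⟨a', b', ha', hb', ?_, ?_⟩
    · rw [← dist_pos, hdist]; exact mul_pos two_pos (dist_pos.2 hcq)
    · rw [hmid, hdist]; ring
end
end

section
/- Let a, b be two points on a line L ⊆ ℝ² with dist(a,b) ≤ 1, let q be the midpoint of [a,b], and let c ∈ ℝ² \ L satisfy dist(q,c) ≥ dist(q,a). Then every unit square S (side length 1, arbitrary orientation) such that c ∈ S, L separates the centre of S from c, and S intersects the segment [a,b], contains a or b. -/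
open Classical MeasureTheory
noncomputable section

/-- Signed side of the line through `a` and `b` on which `x` lies. -/
def sideVal (a b x : Pt) : ℝ := (b 0 - a 0) * (x 1 - a 1) - (b 1 - a 1) * (x 0 - a 0)



set_option maxHeartbeats 1000000 in
/-- Core geometric lemma: the segment `[A,B]` crosses the boundary of the square
`[-1/2,1/2]²` through the right edge (at parameter `l`) and the top edge (at
parameter `m`), the line `AB` separates the centre from `C ∈ Q`; then `C` lies
strictly inside the disk with diameter `[A,B]`, contradicting `hq`. -/
lemma adj_case (a1 a2 b1 b2 c1 c2 l m : ℝ)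
    (hc1 : |c1| ≤ 1/2) (hc2 : |c2| ≤ 1/2)
    (hl : 0 < l) (hlm : l < m) (hm1 : m < 1)
    (hp1x : a1 + l*(b1-a1) = 1/2)
    (hp1y : |a2 + l*(b2-a2)| ≤ 1/2)
    (hp2y : a2 + m*(b2-a2) = 1/2)
    (hp2x : |a1 + m*(b1-a1)| ≤ 1/2)
    (hsep : ((b1-a1)*(0-a2) - (b2-a2)*(0-a1)) * ((b1-a1)*(c2-a2) - (b2-a2)*(c1-a1)) < 0)
    (hq : ((b1-a1)^2+(b2-a2)^2)/4 ≤ (c1 - (a1+b1)/2)^2 + (c2 - (a2+b2)/2)^2) :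
    False := by
  have hW : 0 ≤ (c1-a1)*(c1-b1) + (c2-a2)*(c2-b2) := by nlinarith [hq]
  clear hq
  obtain ⟨hc1l, hc1u⟩ := abs_le.mp hc1
  obtain ⟨hc2l, hc2u⟩ := abs_le.mp hc2
  obtain ⟨dx, hdx⟩ : ∃ d, b1 - a1 = d := ⟨_, rfl⟩
  obtain ⟨dy, hdy⟩ : ∃ d, b2 - a2 = d := ⟨_, rfl⟩
  have e_a1 : a1 = 1/2 - l*dx := by rw [hdx] at hp1x; linarith
  have e_a2 : a2 = 1/2 - m*dy := by rw [hdy] at hp2y; linarith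
  have e_b1 : b1 = 1/2 - l*dx + dx := by rw [e_a1] at hdx; linarith
  have e_b2 : b2 = 1/2 - m*dy + dy := by rw [e_a2] at hdy; linarith
  subst e_a1 e_a2 e_b1 e_b2
  obtain ⟨sO, hsO⟩ : ∃ r, dy*(1/2 - l*dx) - dx*(1/2 - m*dy) = r := ⟨_, rfl⟩
  obtain ⟨sC, hsC⟩ : ∃ r, dx*(c2 - (1/2 - m*dy)) - dy*(c1 - (1/2 - l*dx)) = r := ⟨_, rfl⟩
  have hsep' : sO * sC < 0 := by
    have e : ((1/2 - l*dx + dx - (1/2 - l*dx))*(0 - (1/2 - m*dy)) -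
        (1/2 - m*dy + dy - (1/2 - m*dy))*(0 - (1/2 - l*dx))) *
        ((1/2 - l*dx + dx - (1/2 - l*dx))*(c2 - (1/2 - m*dy)) -
        (1/2 - m*dy + dy - (1/2 - m*dy))*(c1 - (1/2 - l*dx))) = sO * sC := by
      rw [← hsO, ← hsC]; ring
    rw [e] at hsep; exact hsep
  clear hsep
  obtain ⟨w1, hw1⟩ : ∃ w, (m - l)*dx = w := ⟨_, rfl⟩
  obtain ⟨w2, hw2⟩ : ∃ w, (m - l)*dy = w := ⟨_, rfl⟩
  have hp2x' : |1/2 + w1| ≤ 1/2 := by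
    rw [← hw1]; convert hp2x using 2; ring
  have hp1y' : |1/2 - w2| ≤ 1/2 := by
    rw [← hw2]; convert hp1y using 2; ring
  clear hp1x hp2y hp1y hp2x hc1 hc2
  obtain ⟨h1l, h1u⟩ := abs_le.mp hp2x'
  obtain ⟨h2l, h2u⟩ := abs_le.mp hp1y'
  clear hp2x' hp1y'
  have hw1n : w1 ≤ 0 := by linarith
  have hw2n : 0 ≤ w2 := by linarith
  have hml : 0 < m - l := by linarith
  -- sO > 0, sC < 0
  have hgO : (m - l)*sO = 1/4 - (1/2 - w2)*(1/2 + w1) := by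
    rw [← hsO, ← hw1, ← hw2]; ring
  have hgOnn : 0 ≤ (m - l)*sO := by rw [hgO]; nlinarith [h1l, h1u, h2l, h2u]
  have hsOpos : 0 < sO := by
    rcases lt_or_ge 0 sO with h | h
    · exact h
    · exfalso
      rcases lt_or_eq_of_le h with hlt | heq
      · have := mul_pos hml (neg_pos.mpr hlt)
        nlinarith [hgOnn]
      · rw [heq] at hsep'
        simp at hsep'
  have hsCneg : sC < 0 := by
    by_contra hcon
    push_neg at hcon
    have := mul_nonneg hsOpos.le hcon
    linarith
  -- C is in the corner box
  have hCpos : 0 < -((m - l)*sC) := by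
    have := mul_pos hml (neg_pos.mpr hsCneg)
    nlinarith [this]
  have hid1 : -((m - l)*sC) = w2*(c1 - (1/2 + w1)) + (-w1)*(c2 - 1/2) := by
    rw [← hsC, ← hw1, ← hw2]; ring
  have hid2 : -((m - l)*sC) = (-w1)*(c2 - (1/2 - w2)) + w2*(c1 - 1/2) := by
    rw [← hsC, ← hw1, ← hw2]; ring
  have claim1 : 1/2 + w1 ≤ c1 := by
    by_contra hcon
    push_neg at hcon
    linarith [hCpos, hid1, mul_nonneg hw2n (sub_pos.mpr hcon).le,
      mul_nonneg (neg_nonneg.mpr hw1n) (sub_nonneg.mpr hc2u)]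
  have claim2 : 1/2 - w2 ≤ c2 := by
    by_contra hcon
    push_neg at hcon
    linarith [hCpos, hid2, mul_nonneg (neg_nonneg.mpr hw1n) (sub_pos.mpr hcon).le,
      mul_nonneg hw2n (sub_nonneg.mpr hc1u)]
  -- the angle at C over the two exit points is ≥ 90°
  have hE : (c1 - 1/2)*(c1 - (1/2 + w1)) + (c2 - (1/2 - w2))*(c2 - 1/2) ≤ 0 := by
    linarith [mul_nonneg (sub_nonneg.mpr hc1u) (sub_nonneg.mpr claim1),
      mul_nonneg (sub_nonneg.mpr hc2u) (sub_nonneg.mpr claim2)]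
  -- quadratic combination along the line
  obtain ⟨D2, hD2def⟩ : ∃ r, dx^2 + dy^2 = r := ⟨_, rfl⟩
  obtain ⟨S, hSdef⟩ : ∃ r, (c1 - (1/2 - l*dx))*dx + (c2 - (1/2 - m*dy))*dy = r := ⟨_, rfl⟩
  have hD2 : 0 < D2 := by
    rcases lt_or_ge 0 D2 with h | h
    · exact h
    · exfalso
      have hdx2 : dx^2 = 0 := le_antisymm (by nlinarith [sq_nonneg dy]) (sq_nonneg dx)
      have hdy2 : dy^2 = 0 := le_antisymm (by nlinarith [sq_nonneg dx]) (sq_nonneg dy)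
      have hx : dx = 0 := by
        have := sq_eq_zero_iff.mp hdx2; exact this
      have hy : dy = 0 := by
        have := sq_eq_zero_iff.mp hdy2; exact this
      rw [hx, hy] at hsO; rw [← hsO] at hsOpos; norm_num at hsOpos
  have I1 : ((c1 - 1/2)*(c1 - (1/2 + w1)) + (c2 - (1/2 - w2))*(c2 - 1/2)) * D2
      = sC^2 + (S - l*D2)*(S - m*D2) := by
    rw [← hsC, ← hSdef, ← hD2def, ← hw1, ← hw2]; ring
  have hED : sC^2 + (S - l*D2)*(S - m*D2) ≤ 0 := by
    rw [← I1]; exact mul_nonpos_of_nonpos_of_nonneg hE hD2.le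
  have hS1 : l*D2 ≤ S := by
    by_contra hcon
    push_neg at hcon
    linarith [hED, sq_nonneg sC,
      mul_pos (sub_pos.mpr hcon) (by linarith [mul_pos hml hD2] : (0:ℝ) < m*D2 - S)]
  have hS2 : S ≤ m*D2 := by
    by_contra hcon
    push_neg at hcon
    linarith [hED, sq_nonneg sC,
      mul_pos (sub_pos.mpr hcon) (by linarith [mul_pos hml hD2] : (0:ℝ) < S - l*D2)]
  have hSpos : 0 < S := by linarith [mul_pos hl hD2]
  have I3 : sC^2 + S*(S - D2)
      = (sC^2 + (S - l*D2)*(S - m*D2)) + (l*D2)*(S - m*D2) + ((m-1)*S)*D2 := by ring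
  have hterm1 : (l*D2)*(S - m*D2) ≤ 0 :=
    mul_nonpos_of_nonneg_of_nonpos (by positivity) (by linarith)
  have hterm2 : ((m-1)*S)*D2 < 0 :=
    mul_neg_of_neg_of_pos (mul_neg_of_neg_of_pos (by linarith) hSpos) hD2
  have key : sC^2 + S*(S - D2) < 0 := by rw [I3]; linarith
  have I2 : ((c1 - (1/2 - l*dx))*(c1 - (1/2 - l*dx + dx)) +
      (c2 - (1/2 - m*dy))*(c2 - (1/2 - m*dy + dy))) * D2
      = sC^2 + S*(S - D2) := by
    rw [← hsC, ← hSdef, ← hD2def]; ring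
  have hfin : 0 ≤ sC^2 + S*(S - D2) := by
    rw [← I2]; exact mul_nonneg hW hD2.le
  linarith

lemma conv_abs (θ M N : ℝ) (h0 : 0 ≤ θ) (h1 : θ ≤ 1) (hM : |M| ≤ 1/2) (hN : |N| ≤ 1/2) :
    |(1-θ)*M + θ*N| ≤ 1/2 := by
  obtain ⟨hM1, hM2⟩ := abs_le.mp hM
  obtain ⟨hN1, hN2⟩ := abs_le.mp hN
  rw [abs_le]
  constructor <;> nlinarith


/-- Exit point: moving from a point `(m1,m2)` of the square `[-1/2,1/2]²` towards a point
`(a1,a2)` outside it, there is a last parameter `t` at which we are still in the square;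
there the trajectory is on the boundary. -/
lemma exit_point (m1 m2 a1 a2 : ℝ) (hm1 : |m1| ≤ 1/2) (hm2 : |m2| ≤ 1/2)
    (hA : ¬(|a1| ≤ 1/2 ∧ |a2| ≤ 1/2)) :
    ∃ t : ℝ, 0 ≤ t ∧ t < 1 ∧
      |(1-t)*m1 + t*a1| ≤ 1/2 ∧ |(1-t)*m2 + t*a2| ≤ 1/2 ∧
      (|(1-t)*m1 + t*a1| = 1/2 ∨ |(1-t)*m2 + t*a2| = 1/2) ∧
      ∀ t' : ℝ, t < t' → t' ≤ 1 →
        ¬(|(1-t')*m1 + t'*a1| ≤ 1/2 ∧ |(1-t')*m2 + t'*a2| ≤ 1/2) := by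
  set T : Set ℝ := {t | t ∈ Set.Icc (0:ℝ) 1 ∧ |(1-t)*m1 + t*a1| ≤ 1/2 ∧ |(1-t)*m2 + t*a2| ≤ 1/2}
    with hT
  have hcont1 : Continuous fun t : ℝ => (1-t)*m1 + t*a1 := by continuity
  have hcont2 : Continuous fun t : ℝ => (1-t)*m2 + t*a2 := by continuity
  have hclosed : IsClosed T := by
    have h1 : IsClosed {t : ℝ | |(1-t)*m1 + t*a1| ≤ 1/2} :=
      isClosed_le (by continuity) continuous_const
    have h2 : IsClosed {t : ℝ | |(1-t)*m2 + t*a2| ≤ 1/2} :=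
      isClosed_le (by continuity) continuous_const
    exact (isClosed_Icc.inter (h1.inter h2))
  have h0T : (0:ℝ) ∈ T := by
    constructor
    · exact ⟨le_refl _, by norm_num⟩
    constructor
    · show |(1-(0:ℝ))*m1 + 0*a1| ≤ 1/2; simpa using hm1
    · show |(1-(0:ℝ))*m2 + 0*a2| ≤ 1/2; simpa using hm2
  have hbdd : BddAbove T := ⟨1, fun x hx => hx.1.2⟩
  have hne : T.Nonempty := ⟨0, h0T⟩
  set t0 := sSup T with ht0
  have ht0T : t0 ∈ T := hclosed.csSup_mem hne hbdd
  obtain ⟨⟨ht00, ht01⟩, hb1, hb2⟩ := ht0T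
  have h1T : (1:ℝ) ∉ T := by
    intro h
    exact hA ⟨by simpa using h.2.1, by simpa using h.2.2⟩
  have ht0lt1 : t0 < 1 := lt_of_le_of_ne ht01 (fun h => h1T (h ▸ hclosed.csSup_mem hne hbdd))
  have hsup : ∀ t' : ℝ, t0 < t' → t' ≤ 1 →
      ¬(|(1-t')*m1 + t'*a1| ≤ 1/2 ∧ |(1-t')*m2 + t'*a2| ≤ 1/2) := by
    intro t' h1 h2 h3
    have : t' ∈ T := ⟨⟨le_trans ht00 (le_of_lt h1), h2⟩, h3.1, h3.2⟩
    exact absurd (le_csSup hbdd this) (not_le.mpr h1)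
  refine ⟨t0, ht00, ht0lt1, hb1, hb2, ?_, hsup⟩
  by_contra hcon
  push_neg at hcon
  obtain ⟨hc1, hc2⟩ := hcon
  have hs1 : |(1-t0)*m1 + t0*a1| < 1/2 := lt_of_le_of_ne hb1 hc1
  have hs2 : |(1-t0)*m2 + t0*a2| < 1/2 := lt_of_le_of_ne hb2 hc2
  set d1 := a1 - m1
  set d2 := a2 - m2
  set δ : ℝ := min (1 - t0) (min ((1/2 - |(1-t0)*m1 + t0*a1|)/(|d1|+1))
    ((1/2 - |(1-t0)*m2 + t0*a2|)/(|d2|+1))) with hδ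
  have hd1 : (0:ℝ) < |d1| + 1 := by positivity
  have hd2 : (0:ℝ) < |d2| + 1 := by positivity
  have hδpos : 0 < δ := by
    refine lt_min (by linarith) (lt_min ?_ ?_) <;> exact div_pos (by linarith) (by positivity)
  set t' := t0 + δ/2 with ht'
  have ht'le : t' ≤ 1 := by
    have : δ ≤ 1 - t0 := min_le_left _ _
    simp only [ht']; linarith
  have key : ∀ (m a : ℝ), |(1-t0)*m + t0*a| < 1/2 →
      δ ≤ (1/2 - |(1-t0)*m + t0*a|)/(|a - m|+1) →
      |(1-t')*m + t'*a| ≤ 1/2 := by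
    intro m a hlt hle
    have hd : (0:ℝ) < |a - m| + 1 := by positivity
    have h1 : (1-t')*m + t'*a = ((1-t0)*m + t0*a) + (δ/2)*(a-m) := by
      simp only [ht']; ring
    rw [h1]
    have h2 : |((1-t0)*m + t0*a) + (δ/2)*(a-m)| ≤ |(1-t0)*m + t0*a| + (δ/2)*|a-m| := by
      calc _ ≤ |(1-t0)*m + t0*a| + |(δ/2)*(a-m)| := abs_add_le _ _
        _ = _ := by rw [abs_mul, abs_of_nonneg (by linarith : (0:ℝ) ≤ δ/2)]
    have h3 : (δ/2)*|a-m| ≤ 1/2 - |(1-t0)*m + t0*a| := by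
      have hδm : δ * (|a-m|+1) ≤ (1/2 - |(1-t0)*m + t0*a|) := by
        have h4 := (le_div_iff₀ hd).mp hle
        linarith
      nlinarith [abs_nonneg (a-m), hδpos]

    linarith
  have h1' : |(1-t')*m1 + t'*a1| ≤ 1/2 := key m1 a1 hs1 (le_trans (min_le_right _ _) (min_le_left _ _))
  have h2' : |(1-t')*m2 + t'*a2| ≤ 1/2 := key m2 a2 hs2 (le_trans (min_le_right _ _) (min_le_right _ _))
  exact hsup t' (by simp only [ht']; linarith) ht'le ⟨h1', h2'⟩

set_option maxHeartbeats 4000000 in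
lemma main_square (a1 a2 b1 b2 c1 c2 t : ℝ)
    (hc1 : |c1| ≤ 1/2) (hc2 : |c2| ≤ 1/2)
    (hab : (b1-a1)^2 + (b2-a2)^2 ≤ 1)
    (hsep : ((b1-a1)*(0-a2) - (b2-a2)*(0-a1)) * ((b1-a1)*(c2-a2) - (b2-a2)*(c1-a1)) < 0)
    (ht0 : 0 ≤ t) (ht1 : t ≤ 1)
    (hm1 : |(1-t)*a1 + t*b1| ≤ 1/2) (hm2 : |(1-t)*a2 + t*b2| ≤ 1/2)
    (hq : ((b1-a1)^2+(b2-a2)^2)/4 ≤ (c1 - (a1+b1)/2)^2 + (c2 - (a2+b2)/2)^2)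
    (hA : ¬(|a1| ≤ 1/2 ∧ |a2| ≤ 1/2)) (hB : ¬(|b1| ≤ 1/2 ∧ |b2| ≤ 1/2)) : False := by
  -- t is strictly between 0 and 1
  have htpos : 0 < t := by
    rcases eq_or_lt_of_le ht0 with h | h
    · exfalso; rw [← h] at hm1 hm2; norm_num at hm1 hm2; exact hA ⟨hm1, hm2⟩
    · exact h
  have htlt1 : t < 1 := by
    rcases eq_or_lt_of_le ht1 with h | h
    · exfalso; rw [h] at hm1 hm2; norm_num at hm1 hm2; exact hB ⟨hm1, hm2⟩
    · exact h
  -- exit points towards a and towards b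
  obtain ⟨t1, ht10, ht11, hP1x, hP1y, hP1bd, hsupA⟩ :=
    exit_point ((1-t)*a1 + t*b1) ((1-t)*a2 + t*b2) a1 a2 hm1 hm2 hA
  obtain ⟨t2, ht20, ht21, hP2x, hP2y, hP2bd, hsupB⟩ :=
    exit_point ((1-t)*a1 + t*b1) ((1-t)*a2 + t*b2) b1 b2 hm1 hm2 hB
  obtain ⟨lam, hlam⟩ : ∃ r, (1-t1)*t = r := ⟨_, rfl⟩
  obtain ⟨mu, hmu⟩ : ∃ r, t + t2*(1-t) = r := ⟨_, rfl⟩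
  have hlampos : 0 < lam := by rw [← hlam]; exact mul_pos (by linarith) htpos
  have hlamt : lam ≤ t := by nlinarith [hlam]
  have hmut : t ≤ mu := by nlinarith [hmu]
  have hmu1 : mu < 1 := by nlinarith [hmu]
  have hlammu : lam ≤ mu := le_trans hlamt hmut
  -- expressions for P1, P2 in terms of lam, mu
  have eP1x : a1 + lam*(b1-a1) = (1-t1)*((1-t)*a1 + t*b1) + t1*a1 := by
    rw [← hlam]; ring
  have eP1y : a2 + lam*(b2-a2) = (1-t1)*((1-t)*a2 + t*b2) + t1*a2 := by
    rw [← hlam]; ring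
  have eP2x : a1 + mu*(b1-a1) = (1-t2)*((1-t)*a1 + t*b1) + t2*b1 := by
    rw [← hmu]; ring
  have eP2y : a2 + mu*(b2-a2) = (1-t2)*((1-t)*a2 + t*b2) + t2*b2 := by
    rw [← hmu]; ring
  rcases eq_or_lt_of_le hlammu with heq | hlt
  · -- degenerate case: both exit points coincide with M, which is on the boundary
    have hlameq : lam = t := by linarith
    have ht1z : t1 = 0 := by
      have h : t1 * t = 0 := by nlinarith [hlam]
      rcases mul_eq_zero.mp h with h' | h'
      · exact h'
      · exact absurd h' (ne_of_gt htpos)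
    have ht2z : t2 = 0 := by
      have h : t2 * (1-t) = 0 := by nlinarith [hmu]
      rcases mul_eq_zero.mp h with h' | h'
      · exact h'
      · exact absurd (by linarith : t = 1) (ne_of_lt htlt1)
    rw [ht1z] at hP1bd hsupA
    rw [ht2z] at hsupB
    have hMbd : |(1-t)*a1 + t*b1| = 1/2 ∨ |(1-t)*a2 + t*b2| = 1/2 := by
      rcases hP1bd with h | h
      · left; rw [← h]; norm_num
      · right; rw [← h]; norm_num
    -- the crossing point of [centre, C] with the line
    obtain ⟨sO, hsO⟩ : ∃ r, (b1-a1)*(0-a2) - (b2-a2)*(0-a1) = r := ⟨_, rfl⟩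
    obtain ⟨sC, hsC⟩ : ∃ r, (b1-a1)*(c2-a2) - (b2-a2)*(c1-a1) = r := ⟨_, rfl⟩
    rw [hsO, hsC] at hsep
    have hdenne : sO - sC ≠ 0 := by
      intro h
      have : sO = sC := by linarith
      rw [this] at hsep
      nlinarith [sq_nonneg sC]
    obtain ⟨sig, hsig⟩ : ∃ r, sO/(sO - sC) = r := ⟨_, rfl⟩
    have hsigs : sig * (sO - sC) = sO := by rw [← hsig]; exact div_mul_cancel₀ _ hdenne
    have hsig0 : 0 < sig := by
      rw [← hsig]
      rcases mul_neg_iff.mp hsep with ⟨h1, h2⟩ | ⟨h1, h2⟩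
      · exact div_pos h1 (by linarith)
      · exact div_pos_of_neg_of_neg h1 (by linarith)
    have hsig1 : sig < 1 := by
      rcases mul_neg_iff.mp hsep with ⟨h1, h2⟩ | ⟨h1, h2⟩
      · rw [← hsig]; rw [div_lt_one (by linarith)]; linarith
      · have h3 : sig - 1 = sC/(sO - sC) := by
          rw [← hsig, div_sub_one hdenne]
          congr 1
          ring
        have h4 : sC/(sO - sC) < 0 := div_neg_of_pos_of_neg h2 (by linarith)
        linarith [h3 ▸ h4]
    have hn1 : |sig*c1| < 1/2 := by
      rw [abs_mul, abs_of_pos hsig0]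
      have := mul_le_mul_of_nonneg_left hc1 hsig0.le
      linarith
    have hn2 : |sig*c2| < 1/2 := by
      rw [abs_mul, abs_of_pos hsig0]
      have := mul_le_mul_of_nonneg_left hc2 hsig0.le
      linarith
    have hsN : (b1-a1)*(sig*c2 - a2) - (b2-a2)*(sig*c1 - a1) = 0 := by
      linear_combination sig*hsC + (1-sig)*hsO - hsigs
    -- D2 > 0
    have hD2pos : 0 < (b1-a1)^2 + (b2-a2)^2 := by
      rcases lt_or_ge 0 ((b1-a1)^2 + (b2-a2)^2) with h | h
      · exact h
      · exfalso
        have hx : b1-a1 = 0 := by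
          have := sq_nonneg (b1-a1); have := sq_nonneg (b2-a2)
          have h2 : (b1-a1)^2 = 0 := by linarith
          exact sq_eq_zero_iff.mp h2
        have hy : b2-a2 = 0 := by
          have := sq_nonneg (b1-a1); have := sq_nonneg (b2-a2)
          have h2 : (b2-a2)^2 = 0 := by linarith
          exact sq_eq_zero_iff.mp h2
        have : sO = 0 := by rw [← hsO, hx, hy]; ring
        rw [this] at hsep; simp at hsep
    obtain ⟨nu, hnu⟩ : ∃ r, ((sig*c1 - a1)*(b1-a1) + (sig*c2 - a2)*(b2-a2))/((b1-a1)^2 + (b2-a2)^2) = r := ⟨_, rfl⟩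
    have hnus : nu * ((b1-a1)^2 + (b2-a2)^2) = (sig*c1 - a1)*(b1-a1) + (sig*c2 - a2)*(b2-a2) := by
      rw [← hnu]; exact div_mul_cancel₀ _ (ne_of_gt hD2pos)
    have hco1 : sig*c1 - a1 = nu*(b1-a1) := by
      have e : (sig*c1 - a1 - nu*(b1-a1))*((b1-a1)^2 + (b2-a2)^2) = 0 := by
        linear_combination (-(b2-a2))*hsN - (b1-a1)*hnus
      rcases mul_eq_zero.mp e with h | h
      · linarith
      · exact absurd h (ne_of_gt hD2pos)
    have hco2 : sig*c2 - a2 = nu*(b2-a2) := by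
      have e : (sig*c2 - a2 - nu*(b2-a2))*((b1-a1)^2 + (b2-a2)^2) = 0 := by
        linear_combination (b1-a1)*hsN - (b2-a2)*hnus
      rcases mul_eq_zero.mp e with h | h
      · linarith
      · exact absurd h (ne_of_gt hD2pos)
    -- nu ∈ [0,1]
    have hnu1 : nu ≤ 1 := by
      by_contra hcon
      push_neg at hcon
      obtain ⟨th, hth⟩ : ∃ r, (1-t)/(nu-t) = r := ⟨_, rfl⟩
      have hnut : 0 < nu - t := by linarith
      have hths : th*(nu-t) = 1-t := by rw [← hth]; exact div_mul_cancel₀ _ (ne_of_gt hnut)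
      have hth0 : 0 ≤ th := by rw [← hth]; exact div_nonneg (by linarith) (by linarith)
      have hth1 : th ≤ 1 := by rw [← hth]; rw [div_le_one hnut]; linarith
      have hb1e : b1 = (1-th)*((1-t)*a1 + t*b1) + th*(sig*c1) := by
        linear_combination (-th)*hco1 - (b1-a1)*hths
      have hb2e : b2 = (1-th)*((1-t)*a2 + t*b2) + th*(sig*c2) := by
        linear_combination (-th)*hco2 - (b2-a2)*hths
      refine hB ⟨?_, ?_⟩
      · rw [hb1e]; exact conv_abs th _ _ hth0 hth1 hm1 hn1.le
      · rw [hb2e]; exact conv_abs th _ _ hth0 hth1 hm2 hn2.le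
    have hnu0 : 0 ≤ nu := by
      by_contra hcon
      push_neg at hcon
      obtain ⟨th, hth⟩ : ∃ r, t/(t-nu) = r := ⟨_, rfl⟩
      have hnut : 0 < t - nu := by linarith
      have hths : th*(t-nu) = t := by rw [← hth]; exact div_mul_cancel₀ _ (ne_of_gt hnut)
      have hth0 : 0 ≤ th := by rw [← hth]; exact div_nonneg (by linarith) (by linarith)
      have hth1 : th ≤ 1 := by rw [← hth]; rw [div_le_one hnut]; linarith
      have ha1e : a1 = (1-th)*((1-t)*a1 + t*b1) + th*(sig*c1) := by
        linear_combination (-th)*hco1 + (b1-a1)*hths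
      have ha2e : a2 = (1-th)*((1-t)*a2 + t*b2) + th*(sig*c2) := by
        linear_combination (-th)*hco2 + (b2-a2)*hths
      refine hA ⟨?_, ?_⟩
      · rw [ha1e]; exact conv_abs th _ _ hth0 hth1 hm1 hn1.le
      · rw [ha2e]; exact conv_abs th _ _ hth0 hth1 hm2 hn2.le
    -- now compare nu with t
    rcases lt_trichotomy nu t with hlt' | heq' | hgt'
    · -- the crossing point is strictly between M and A : contradicts the sup property
      obtain ⟨tp, htp⟩ : ∃ r, (t-nu)/t = r := ⟨_, rfl⟩
      have htps : tp*t = t - nu := by rw [← htp]; exact div_mul_cancel₀ _ (ne_of_gt htpos)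
      have htp0 : 0 < tp := by rw [← htp]; exact div_pos (by linarith) htpos
      have htp1 : tp ≤ 1 := by rw [← htp]; rw [div_le_one htpos]; linarith
      have e1 : (1-tp)*((1-t)*a1 + t*b1) + tp*a1 = sig*c1 := by
        linear_combination (-(1:ℝ))*hco1 + (-(b1-a1))*htps
      have e2 : (1-tp)*((1-t)*a2 + t*b2) + tp*a2 = sig*c2 := by
        linear_combination (-(1:ℝ))*hco2 + (-(b2-a2))*htps
      exact hsupA tp htp0 htp1 ⟨by rw [e1]; exact hn1.le, by rw [e2]; exact hn2.le⟩
    · -- the crossing point is M itself : M is interior, contradicting the boundary property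
      have e1 : (1-t)*a1 + t*b1 = sig*c1 := by
        rw [heq'] at hco1; linear_combination (-(1:ℝ))*hco1
      have e2 : (1-t)*a2 + t*b2 = sig*c2 := by
        rw [heq'] at hco2; linear_combination (-(1:ℝ))*hco2
      rcases hMbd with h | h
      · rw [e1] at h; exact absurd h (ne_of_lt hn1)
      · rw [e2] at h; exact absurd h (ne_of_lt hn2)
    · -- the crossing point is strictly between M and B : contradicts the sup property
      obtain ⟨tp, htp⟩ : ∃ r, (nu-t)/(1-t) = r := ⟨_, rfl⟩
      have htps : tp*(1-t) = nu - t := by rw [← htp]; exact div_mul_cancel₀ _ (by linarith)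
      have htp0 : 0 < tp := by rw [← htp]; exact div_pos (by linarith) (by linarith)
      have htp1 : tp ≤ 1 := by rw [← htp]; rw [div_le_one (by linarith)]; linarith
      have e1 : (1-tp)*((1-t)*a1 + t*b1) + tp*b1 = sig*c1 := by
        linear_combination (-(1:ℝ))*hco1 + (b1-a1)*htps
      have e2 : (1-tp)*((1-t)*a2 + t*b2) + tp*b2 = sig*c2 := by
        linear_combination (-(1:ℝ))*hco2 + (b2-a2)*htps
      exact hsupB tp htp0 htp1 ⟨by rw [e1]; exact hn1.le, by rw [e2]; exact hn2.le⟩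
  · -- main case: two distinct exit points
    have hmul : 0 < mu - lam := by linarith only [hlt]
    have hP1x' : |a1 + lam*(b1-a1)| ≤ 1/2 := by rw [eP1x]; exact hP1x
    have hP1y' : |a2 + lam*(b2-a2)| ≤ 1/2 := by rw [eP1y]; exact hP1y
    have hP2x' : |a1 + mu*(b1-a1)| ≤ 1/2 := by rw [eP2x]; exact hP2x
    have hP2y' : |a2 + mu*(b2-a2)| ≤ 1/2 := by rw [eP2y]; exact hP2y
    have hbd1 : a1 + lam*(b1-a1) = 1/2 ∨ a1 + lam*(b1-a1) = -(1/2) ∨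
        a2 + lam*(b2-a2) = 1/2 ∨ a2 + lam*(b2-a2) = -(1/2) := by
      rcases hP1bd with h | h
      · rw [← eP1x] at h
        rcases (abs_eq (by norm_num : (0:ℝ) ≤ 1/2)).mp h with h' | h'
        · exact Or.inl h'
        · exact Or.inr (Or.inl h')
      · rw [← eP1y] at h
        rcases (abs_eq (by norm_num : (0:ℝ) ≤ 1/2)).mp h with h' | h'
        · exact Or.inr (Or.inr (Or.inl h'))
        · exact Or.inr (Or.inr (Or.inr h'))
    have hbd2 : a1 + mu*(b1-a1) = 1/2 ∨ a1 + mu*(b1-a1) = -(1/2) ∨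
        a2 + mu*(b2-a2) = 1/2 ∨ a2 + mu*(b2-a2) = -(1/2) := by
      rcases hP2bd with h | h
      · rw [← eP2x] at h
        rcases (abs_eq (by norm_num : (0:ℝ) ≤ 1/2)).mp h with h' | h'
        · exact Or.inl h'
        · exact Or.inr (Or.inl h')
      · rw [← eP2y] at h
        rcases (abs_eq (by norm_num : (0:ℝ) ≤ 1/2)).mp h with h' | h'
        · exact Or.inr (Or.inr (Or.inl h'))
        · exact Or.inr (Or.inr (Or.inr h'))
    rcases hbd1 with hx1 | hx1 | hy1 | hy1
    · rcases hbd2 with hx2 | hx2 | hy2 | hy2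
      · have hdd : (mu - lam)*(b1-a1) = 0 := by linear_combination hx2 - hx1
        have hba : b1 = a1 := by
          rcases mul_eq_zero.mp hdd with h' | h'
          · exfalso; linarith only [h', hmul]
          · linarith only [h']
        rw [hba] at hx1 hsep
        have hav : a1 = 1/2 := by linarith only [hx1]
        rw [hav] at hsep
        obtain ⟨hcl, hcu⟩ := abs_le.mp hc1
        linarith only [hsep, mul_nonneg (sq_nonneg (b2-a2)) (by linarith only [hcu] : (0:ℝ) ≤ 1/2 - c1)]
      · have hdd : (mu - lam)*(b1-a1) = -1 := by linear_combination hx2 - hx1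
        have hmlt1 : mu - lam < 1 := by linarith only [hlampos, hmu1, hlt]
        have h1' : ((mu - lam)*(b1-a1))^2 = 1 := by rw [hdd]; norm_num
        have h2' : (mu - lam)^2 < 1 := by nlinarith only [hmul, hmlt1]
        have h3' : (mu - lam)^2*((b1-a1)^2+(b2-a2)^2) ≤ (mu - lam)^2 := by
          nlinarith only [sq_nonneg (mu - lam), hab]
        linarith only [h1', h2', h3', sq_nonneg ((mu - lam)*(b2-a2))]
      · refine adj_case a1 a2 b1 b2 c1 c2 lam mu hc1 hc2 hlampos hlt hmu1 ?_ ?_ ?_ ?_ ?_ ?_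
        · exact hx1
        · obtain ⟨u1, u2⟩ := abs_le.mp hP1y'
          rw [abs_le]; constructor <;> linarith only [u1, u2]
        · exact hy2
        · obtain ⟨u1, u2⟩ := abs_le.mp hP2x'
          rw [abs_le]; constructor <;> linarith only [u1, u2]
        · linarith only [hsep]
        · linarith only [hq]
      · refine adj_case a1 (-a2) b1 (-b2) c1 (-c2) lam mu hc1 (by rwa [abs_neg]) hlampos hlt hmu1 ?_ ?_ ?_ ?_ ?_ ?_
        · exact hx1
        · obtain ⟨u1, u2⟩ := abs_le.mp hP1y'
          rw [abs_le]; constructor <;> linarith only [u1, u2]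
        · linear_combination -hy2
        · obtain ⟨u1, u2⟩ := abs_le.mp hP2x'
          rw [abs_le]; constructor <;> linarith only [u1, u2]
        · linarith only [hsep]
        · linarith only [hq]
    · rcases hbd2 with hx2 | hx2 | hy2 | hy2
      · have hdd : (mu - lam)*(b1-a1) = 1 := by linear_combination hx2 - hx1
        have hmlt1 : mu - lam < 1 := by linarith only [hlampos, hmu1, hlt]
        have h1' : ((mu - lam)*(b1-a1))^2 = 1 := by rw [hdd]; norm_num
        have h2' : (mu - lam)^2 < 1 := by nlinarith only [hmul, hmlt1]
        have h3' : (mu - lam)^2*((b1-a1)^2+(b2-a2)^2) ≤ (mu - lam)^2 := by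
          nlinarith only [sq_nonneg (mu - lam), hab]
        linarith only [h1', h2', h3', sq_nonneg ((mu - lam)*(b2-a2))]
      · have hdd : (mu - lam)*(b1-a1) = 0 := by linear_combination hx2 - hx1
        have hba : b1 = a1 := by
          rcases mul_eq_zero.mp hdd with h' | h'
          · exfalso; linarith only [h', hmul]
          · linarith only [h']
        rw [hba] at hx1 hsep
        have hav : a1 = -(1/2) := by linarith only [hx1]
        rw [hav] at hsep
        obtain ⟨hcl, hcu⟩ := abs_le.mp hc1
        linarith only [hsep, mul_nonneg (sq_nonneg (b2-a2)) (by linarith only [hcl] : (0:ℝ) ≤ c1 + 1/2)]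
      · refine adj_case (-a1) a2 (-b1) b2 (-c1) c2 lam mu (by rwa [abs_neg]) hc2 hlampos hlt hmu1 ?_ ?_ ?_ ?_ ?_ ?_
        · linear_combination -hx1
        · obtain ⟨u1, u2⟩ := abs_le.mp hP1y'
          rw [abs_le]; constructor <;> linarith only [u1, u2]
        · exact hy2
        · obtain ⟨u1, u2⟩ := abs_le.mp hP2x'
          rw [abs_le]; constructor <;> linarith only [u1, u2]
        · linarith only [hsep]
        · linarith only [hq]
      · refine adj_case (-a1) (-a2) (-b1) (-b2) (-c1) (-c2) lam mu (by rwa [abs_neg]) (by rwa [abs_neg]) hlampos hlt hmu1 ?_ ?_ ?_ ?_ ?_ ?_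
        · linear_combination -hx1
        · obtain ⟨u1, u2⟩ := abs_le.mp hP1y'
          rw [abs_le]; constructor <;> linarith only [u1, u2]
        · linear_combination -hy2
        · obtain ⟨u1, u2⟩ := abs_le.mp hP2x'
          rw [abs_le]; constructor <;> linarith only [u1, u2]
        · linarith only [hsep]
        · linarith only [hq]
    · rcases hbd2 with hx2 | hx2 | hy2 | hy2
      · refine adj_case a2 a1 b2 b1 c2 c1 lam mu hc2 hc1 hlampos hlt hmu1 ?_ ?_ ?_ ?_ ?_ ?_
        · exact hy1
        · obtain ⟨u1, u2⟩ := abs_le.mp hP1x'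
          rw [abs_le]; constructor <;> linarith only [u1, u2]
        · exact hx2
        · obtain ⟨u1, u2⟩ := abs_le.mp hP2y'
          rw [abs_le]; constructor <;> linarith only [u1, u2]
        · linarith only [hsep]
        · linarith only [hq]
      · refine adj_case a2 (-a1) b2 (-b1) c2 (-c1) lam mu hc2 (by rwa [abs_neg]) hlampos hlt hmu1 ?_ ?_ ?_ ?_ ?_ ?_
        · exact hy1
        · obtain ⟨u1, u2⟩ := abs_le.mp hP1x'
          rw [abs_le]; constructor <;> linarith only [u1, u2]
        · linear_combination -hx2
        · obtain ⟨u1, u2⟩ := abs_le.mp hP2y'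
          rw [abs_le]; constructor <;> linarith only [u1, u2]
        · linarith only [hsep]
        · linarith only [hq]
      · have hdd : (mu - lam)*(b2-a2) = 0 := by linear_combination hy2 - hy1
        have hba : b2 = a2 := by
          rcases mul_eq_zero.mp hdd with h' | h'
          · exfalso; linarith only [h', hmul]
          · linarith only [h']
        rw [hba] at hy1 hsep
        have hav : a2 = 1/2 := by linarith only [hy1]
        rw [hav] at hsep
        obtain ⟨hcl, hcu⟩ := abs_le.mp hc2
        linarith only [hsep, mul_nonneg (sq_nonneg (b1-a1)) (by linarith only [hcu] : (0:ℝ) ≤ 1/2 - c2)]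
      · have hdd : (mu - lam)*(b2-a2) = -1 := by linear_combination hy2 - hy1
        have hmlt1 : mu - lam < 1 := by linarith only [hlampos, hmu1, hlt]
        have h1' : ((mu - lam)*(b2-a2))^2 = 1 := by rw [hdd]; norm_num
        have h2' : (mu - lam)^2 < 1 := by nlinarith only [hmul, hmlt1]
        have h3' : (mu - lam)^2*((b1-a1)^2+(b2-a2)^2) ≤ (mu - lam)^2 := by
          nlinarith only [sq_nonneg (mu - lam), hab]
        linarith only [h1', h2', h3', sq_nonneg ((mu - lam)*(b1-a1))]
    · rcases hbd2 with hx2 | hx2 | hy2 | hy2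
      · refine adj_case (-a2) a1 (-b2) b1 (-c2) c1 lam mu (by rwa [abs_neg]) hc1 hlampos hlt hmu1 ?_ ?_ ?_ ?_ ?_ ?_
        · linear_combination -hy1
        · obtain ⟨u1, u2⟩ := abs_le.mp hP1x'
          rw [abs_le]; constructor <;> linarith only [u1, u2]
        · exact hx2
        · obtain ⟨u1, u2⟩ := abs_le.mp hP2y'
          rw [abs_le]; constructor <;> linarith only [u1, u2]
        · linarith only [hsep]
        · linarith only [hq]
      · refine adj_case (-a2) (-a1) (-b2) (-b1) (-c2) (-c1) lam mu (by rwa [abs_neg]) (by rwa [abs_neg]) hlampos hlt hmu1 ?_ ?_ ?_ ?_ ?_ ?_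
        · linear_combination -hy1
        · obtain ⟨u1, u2⟩ := abs_le.mp hP1x'
          rw [abs_le]; constructor <;> linarith only [u1, u2]
        · linear_combination -hx2
        · obtain ⟨u1, u2⟩ := abs_le.mp hP2y'
          rw [abs_le]; constructor <;> linarith only [u1, u2]
        · linarith only [hsep]
        · linarith only [hq]
      · have hdd : (mu - lam)*(b2-a2) = 1 := by linear_combination hy2 - hy1
        have hmlt1 : mu - lam < 1 := by linarith only [hlampos, hmu1, hlt]
        have h1' : ((mu - lam)*(b2-a2))^2 = 1 := by rw [hdd]; norm_num
        have h2' : (mu - lam)^2 < 1 := by nlinarith only [hmul, hmlt1]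
        have h3' : (mu - lam)^2*((b1-a1)^2+(b2-a2)^2) ≤ (mu - lam)^2 := by
          nlinarith only [sq_nonneg (mu - lam), hab]
        linarith only [h1', h2', h3', sq_nonneg ((mu - lam)*(b1-a1))]
      · have hdd : (mu - lam)*(b2-a2) = 0 := by linear_combination hy2 - hy1
        have hba : b2 = a2 := by
          rcases mul_eq_zero.mp hdd with h' | h'
          · exfalso; linarith only [h', hmul]
          · linarith only [h']
        rw [hba] at hy1 hsep
        have hav : a2 = -(1/2) := by linarith only [hy1]
        rw [hav] at hsep
        obtain ⟨hcl, hcu⟩ := abs_le.mp hc2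
        linarith only [hsep, mul_nonneg (sq_nonneg (b1-a1)) (by linarith only [hcl] : (0:ℝ) ≤ c2 + 1/2)]


lemma dist_sq_forms (cen : Pt) (θ : ℝ) (x y : Pt) :
    (sqForm1 cen θ x - sqForm1 cen θ y)^2 + (sqForm2 cen θ x - sqForm2 cen θ y)^2
      = dist x y ^ 2 := by
  have h : dist x y ^ 2 = (x 0 - y 0)^2 + (x 1 - y 1)^2 := by
    rw [EuclideanSpace.dist_eq]
    rw [Real.sq_sqrt (by positivity)]
    simp [Fin.sum_univ_two, Real.dist_eq, sq_abs]
  rw [h]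
  simp only [sqForm1, sqForm2]
  linear_combination ((x 0 - y 0)^2 + (x 1 - y 1)^2) * Real.sin_sq_add_cos_sq θ

lemma cross_forms (cen : Pt) (θ : ℝ) (a b x : Pt) :
    (sqForm1 cen θ b - sqForm1 cen θ a) * (sqForm2 cen θ x - sqForm2 cen θ a)
      - (sqForm2 cen θ b - sqForm2 cen θ a) * (sqForm1 cen θ x - sqForm1 cen θ a)
      = -(sideVal a b x) := by
  simp only [sqForm1, sqForm2, sideVal]
  linear_combination (-((b 0 - a 0) * (x 1 - a 1) - (b 1 - a 1) * (x 0 - a 0))) *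
    Real.sin_sq_add_cos_sq θ

lemma form_cen1 (cen : Pt) (θ : ℝ) : sqForm1 cen θ cen = 0 := by
  simp [sqForm1]

lemma form_cen2 (cen : Pt) (θ : ℝ) : sqForm2 cen θ cen = 0 := by
  simp [sqForm2]

set_option maxHeartbeats 1000000 in
theorem stmt_8 (a b c : Pt) (hab : dist a b ≤ 1)
    (hq : dist (midpoint ℝ a b) a ≤ dist (midpoint ℝ a b) c)
    (cen : Pt) (θ : ℝ)
    (hc : c ∈ sqSet cen θ 1)
    (hsep : sideVal a b cen * sideVal a b c < 0)
    (hseg : (sqSet cen θ 1 ∩ segment ℝ a b).Nonempty) :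
    a ∈ sqSet cen θ 1 ∨ b ∈ sqSet cen θ 1 := by
  by_contra hcon
  push_neg at hcon
  obtain ⟨hA, hB⟩ := hcon
  obtain ⟨m, hmQ, hmseg⟩ := hseg
  obtain ⟨u, v, hu, hv, huv, hmeq⟩ := hmseg
  -- coordinates of m
  have hm0 : m 0 = u * a 0 + v * b 0 := by
    rw [← hmeq]; simp
  have hm1c : m 1 = u * a 1 + v * b 1 := by
    rw [← hmeq]; simp
  -- midpoint coordinates
  have hq0 : (midpoint ℝ a b) 0 = (a 0 + b 0)/2 := by
    rw [midpoint_eq_smul_add]; simp; ring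
  have hq1 : (midpoint ℝ a b) 1 = (a 1 + b 1)/2 := by
    rw [midpoint_eq_smul_add]; simp; ring
  -- forms of m and q
  have hfm1 : sqForm1 cen θ m = (1-v) * sqForm1 cen θ a + v * sqForm1 cen θ b := by
    simp only [sqForm1]
    rw [hm0, hm1c]
    have hu' : u = 1 - v := by linarith
    rw [hu']; ring
  have hfm2 : sqForm2 cen θ m = (1-v) * sqForm2 cen θ a + v * sqForm2 cen θ b := by
    simp only [sqForm2]
    rw [hm0, hm1c]
    have hu' : u = 1 - v := by linarith
    rw [hu']; ring
  have hfq1 : sqForm1 cen θ (midpoint ℝ a b)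
      = (sqForm1 cen θ a + sqForm1 cen θ b)/2 := by
    simp only [sqForm1]
    rw [hq0, hq1]; ring
  have hfq2 : sqForm2 cen θ (midpoint ℝ a b)
      = (sqForm2 cen θ a + sqForm2 cen θ b)/2 := by
    simp only [sqForm2]
    rw [hq0, hq1]; ring
  -- distance facts squared
  have hab2 : (sqForm1 cen θ b - sqForm1 cen θ a)^2 + (sqForm2 cen θ b - sqForm2 cen θ a)^2 ≤ 1 := by
    rw [dist_sq_forms, dist_comm b a]
    nlinarith [dist_nonneg (x := a) (y := b), hab]
  have hq2 : dist (midpoint ℝ a b) a ^ 2 ≤ dist (midpoint ℝ a b) c ^ 2 := by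
    have h1 := dist_nonneg (x := midpoint ℝ a b) (y := a)
    nlinarith
  rw [← dist_sq_forms cen θ, ← dist_sq_forms cen θ] at hq2
  rw [hfq1, hfq2] at hq2
  -- separation
  have hsep' : ((sqForm1 cen θ b - sqForm1 cen θ a)*(0 - sqForm2 cen θ a)
      - (sqForm2 cen θ b - sqForm2 cen θ a)*(0 - sqForm1 cen θ a))
      * ((sqForm1 cen θ b - sqForm1 cen θ a)*(sqForm2 cen θ c - sqForm2 cen θ a)
      - (sqForm2 cen θ b - sqForm2 cen θ a)*(sqForm1 cen θ c - sqForm1 cen θ a)) < 0 := by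
    have h1 := cross_forms cen θ a b cen
    rw [form_cen1, form_cen2] at h1
    have h2 := cross_forms cen θ a b c
    rw [h1, h2, neg_mul_neg]
    exact hsep
  -- assemble
  have hcQ1 : |sqForm1 cen θ c| ≤ 1/2 := hc.1
  have hcQ2 : |sqForm2 cen θ c| ≤ 1/2 := hc.2
  have hmQ1 : |(1-v) * sqForm1 cen θ a + v * sqForm1 cen θ b| ≤ 1/2 := by
    rw [← hfm1]; exact hmQ.1
  have hmQ2 : |(1-v) * sqForm2 cen θ a + v * sqForm2 cen θ b| ≤ 1/2 := by
    rw [← hfm2]; exact hmQ.2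
  have hA' : ¬(|sqForm1 cen θ a| ≤ 1/2 ∧ |sqForm2 cen θ a| ≤ 1/2) := hA
  have hB' : ¬(|sqForm1 cen θ b| ≤ 1/2 ∧ |sqForm2 cen θ b| ≤ 1/2) := hB
  refine main_square (sqForm1 cen θ a) (sqForm2 cen θ a) (sqForm1 cen θ b) (sqForm2 cen θ b)
    (sqForm1 cen θ c) (sqForm2 cen θ c) v hcQ1 hcQ2 hab2 hsep' hv (by linarith) hmQ1 hmQ2 ?_ hA' hB'
  nlinarith [hq2]
end
end

section
/- Let a, b ∈ ℝ² with √2 − 1 ≤ dist(a,b) ≤ 1, let q be the midpoint of [a,b], and let d = dist(q,a). Then every square of side length at least 1 (arbitrary orientation) whose centre lies in the closed disk of centre q and radius √2/2 − d contains a or b. -/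
open Classical MeasureTheory
set_option maxHeartbeats 1000000
noncomputable section

lemma dist_sq' (x y : Pt) : dist x y ^ 2 = (x 0 - y 0)^2 + (x 1 - y 1)^2 := by
  rw [EuclideanSpace.dist_eq, Real.sq_sqrt (by positivity)]
  simp [Fin.sum_univ_two, Real.dist_eq, sq_abs]

lemma sqForm_sq (c : Pt) (θ : ℝ) (x y : Pt) :
    (sqForm1 c θ x - sqForm1 c θ y)^2 + (sqForm2 c θ x - sqForm2 c θ y)^2 = dist x y ^ 2 := by
  rw [dist_sq']
  unfold sqForm1 sqForm2
  linear_combination ((x 0 - y 0)^2 + (x 1 - y 1)^2) * (Real.sin_sq_add_cos_sq θ)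

lemma mid_coord (a b : Pt) (i : Fin 2) : (midpoint ℝ a b) i = (a i + b i)/2 := by
  simp [midpoint_eq_smul_add, PiLp.smul_apply, PiLp.add_apply]
  ring

theorem stmt_9 (a b : Pt) (h1 : Real.sqrt 2 - 1 ≤ dist a b) (h2 : dist a b ≤ 1)
    (cen : Pt) (θ s : ℝ) (hs : 1 ≤ s)
    (hcen : cen ∈ Metric.closedBall (midpoint ℝ a b)
      (Real.sqrt 2 / 2 - dist (midpoint ℝ a b) a)) :
    a ∈ sqSet cen θ s ∨ b ∈ sqSet cen θ s := by
  by_contra hcon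
  push_neg at hcon
  obtain ⟨ha, hb⟩ := hcon
  set q := midpoint ℝ a b with hq
  set t := Real.sqrt 2 with htdef
  have ht2 : t^2 = 2 := Real.sq_sqrt (by norm_num)
  have ht0 : 0 ≤ t := Real.sqrt_nonneg 2
  set d := dist q a with hdd
  have hd0 : 0 ≤ d := dist_nonneg
  have hdab : d = dist a b / 2 := by rw [hdd, hq, dist_midpoint_left]; norm_num; ring
  have hdub : 2*d ≤ 1 := by rw [hdab]; linarith
  have hdlb : t - 1 ≤ 2*d := by rw [hdab]; linarith
  set u1 := sqForm1 cen θ a with hu1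
  set u2 := sqForm2 cen θ a with hu2
  set v1 := sqForm1 cen θ b with hv1
  set v2 := sqForm2 cen θ b with hv2
  set m1 := sqForm1 cen θ q with hm1
  set m2 := sqForm2 cen θ q with hm2
  have hmid1 : m1 = (u1 + v1)/2 := by
    rw [hm1, hu1, hv1]; unfold sqForm1
    rw [hq, mid_coord a b 0, mid_coord a b 1]; ring
  have hmid2 : m2 = (u2 + v2)/2 := by
    rw [hm2, hu2, hv2]; unfold sqForm2
    rw [hq, mid_coord a b 0, mid_coord a b 1]; ring
  -- distance facts
  have hr0 : 0 ≤ t/2 - d := le_trans dist_nonneg (Metric.mem_closedBall.mp hcen)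
  have hmnorm : m1^2 + m2^2 ≤ (t/2 - d)^2 := by
    have h0 : sqForm1 cen θ cen = 0 := by unfold sqForm1; ring
    have h0' : sqForm2 cen θ cen = 0 := by unfold sqForm2; ring
    have := sqForm_sq cen θ q cen
    rw [h0, h0'] at this
    simp only [sub_zero] at this
    rw [← hm1, ← hm2] at this
    rw [this]
    have hdq : dist q cen ≤ t/2 - d := by
      rw [dist_comm]; exact Metric.mem_closedBall.mp hcen
    exact pow_le_pow_left₀ dist_nonneg hdq 2
  have hpnorm : (u1 - m1)^2 + (u2 - m2)^2 = d^2 := by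
    have := sqForm_sq cen θ a q
    rw [← hu1, ← hu2, ← hm1, ← hm2] at this
    rw [this, hdd, dist_comm]
  -- outside square conditions
  have ha' : 1/2 < |u1| ∨ 1/2 < |u2| := by
    by_contra h; push_neg at h
    exact ha ⟨by rw [← hu1]; linarith [h.1], by rw [← hu2]; linarith [h.2]⟩
  have hb' : 1/2 < |v1| ∨ 1/2 < |v2| := by
    by_contra h; push_neg at h
    exact hb ⟨by rw [← hv1]; linarith [h.1], by rw [← hv2]; linarith [h.2]⟩
  -- same-coordinate contradiction helper, and cross
  have habs_m1 : |m1| ≤ t/2 - d :=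
    abs_le_of_sq_le_sq (by linarith [sq_nonneg m2]) hr0
  have habs_m2 : |m2| ≤ t/2 - d :=
    abs_le_of_sq_le_sq (by linarith [sq_nonneg m1]) hr0
  have habs_p1 : |u1 - m1| ≤ d :=
    abs_le_of_sq_le_sq (by linarith [sq_nonneg (u2 - m2)]) hd0
  have habs_p2 : |u2 - m2| ≤ d :=
    abs_le_of_sq_le_sq (by linarith [sq_nonneg (u1 - m1)]) hd0
  have hvv1 : v1 = 2*m1 - u1 := by linarith [hmid1]
  have hvv2 : v2 = 2*m2 - u2 := by linarith [hmid2]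
  -- Cauchy-Schwarz bound
  have hkey : (m1*(u1-m1) - m2*(u2-m2))^2 + (m1*(u2-m2) + m2*(u1-m1))^2 = (m1^2 + m2^2)*d^2 := by
    linear_combination (m1^2 + m2^2) * hpnorm
  have hCS : |m1*(u1-m1) - m2*(u2-m2)| ≤ (t/2 - d)*d := by
    refine abs_le_of_sq_le_sq ?_ (mul_nonneg hr0 hd0)
    nlinarith [sq_nonneg (m1*(u2-m2) + m2*(u1-m1)),
      mul_le_mul_of_nonneg_right hmnorm (sq_nonneg d)]
  have hCSa := abs_le.mp hCS
  rcases ha' with hu | hu <;> rcases hb' with hv | hv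
  · -- u1, v1
    have h1' := abs_le.mp habs_m1
    have h2' := abs_le.mp habs_p1
    rcases abs_cases u1 with ⟨e1, _⟩ | ⟨e1, _⟩ <;> rcases abs_cases v1 with ⟨e2, _⟩ | ⟨e2, _⟩ <;>
      rw [e1] at hu <;> rw [e2] at hv <;> linarith
  · -- u1, v2 : cross
    have hu' : 1/4 < u1^2 := by
      have h := mul_self_lt_mul_self (by norm_num : (0:ℝ) ≤ 1/2) hu
      rw [abs_mul_abs_self] at h; rw [pow_two]; linarith
    have hv' : 1/4 < v2^2 := by
      have h := mul_self_lt_mul_self (by norm_num : (0:ℝ) ≤ 1/2) hv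
      rw [abs_mul_abs_self] at h; rw [pow_two]; linarith
    rw [hvv2] at hv'
    have hid : u1^2 + (2*m2 - u2)^2 = (m1^2 + m2^2) + ((u1-m1)^2 + (u2-m2)^2)
        + 2*(m1*(u1-m1) - m2*(u2-m2)) := by ring
    linarith [hmnorm, hpnorm, hCSa.2, ht2, hid, hu', hv']
  · -- u2, v1 : cross
    have hu' : 1/4 < u2^2 := by
      have h := mul_self_lt_mul_self (by norm_num : (0:ℝ) ≤ 1/2) hu
      rw [abs_mul_abs_self] at h; rw [pow_two]; linarith
    have hv' : 1/4 < v1^2 := by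
      have h := mul_self_lt_mul_self (by norm_num : (0:ℝ) ≤ 1/2) hv
      rw [abs_mul_abs_self] at h; rw [pow_two]; linarith
    rw [hvv1] at hv'
    have hid : u2^2 + (2*m1 - u1)^2 = (m1^2 + m2^2) + ((u1-m1)^2 + (u2-m2)^2)
        - 2*(m1*(u1-m1) - m2*(u2-m2)) := by ring
    linarith [hmnorm, hpnorm, hCSa.1, ht2, hid, hu', hv']
  · -- u2, v2
    have h1' := abs_le.mp habs_m2
    have h2' := abs_le.mp habs_p2
    rcases abs_cases u2 with ⟨e1, _⟩ | ⟨e1, _⟩ <;> rcases abs_cases v2 with ⟨e2, _⟩ | ⟨e2, _⟩ <;>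
      rw [e1] at hu <;> rw [e2] at hv <;> linarith
end
end

section
/- If C is a finite family of (possibly rotated) squares of arbitrary sizes with Δ(C) ≥ 2, then the intersection graph of C is (9(Δ(C)−1) − 1)-degenerate, and hence χ(C) ≤ 9(Δ(C) − 1). -/
/-!
Two intersecting squares either have a vertex of one inside the other, or each contains the centre
of the other. Give the ordered pair `(S, T)` the weight
`2 · #(vertices of S in T) + [centre of S ∈ T]`; two intersecting squares then have total weight at
least `2` in the two orders, while a square gives weight at most `9 (Δ - 1)` to its neighbours,
since each of its vertices and its centre lies in at most `Δ - 1` other squares. Double counting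
bounds the average degree by `9 (Δ - 1)`; the bound is strict because the lowest vertex of the
family in a generic direction lies in other squares only as one of their vertices. A `D`-degenerate
family is greedily `(D + 1)`-colourable.

The crossing lemma is proved in coordinates with `S = [-h, h]²`: by symmetry it suffices to show
that the centre of `T` does not lie to the right of `S`, which follows from a case analysis on the
position of the leftmost vertex of `T` and on which sides of `T` the square `S` crosses.
-/

open Classical MeasureTheory
noncomputable section

open Finset

namespace Squares

theorem one_le_add_of_sq_add_sq {c s : ℝ} (hc : 0 ≤ c) (hs : 0 ≤ s) (hcs : c ^ 2 + s ^ 2 = 1) :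
    1 ≤ c + s := by
  nlinarith [mul_nonneg hc hs]

theorem add_sq_le_two_of_sq_add_sq {c s : ℝ} (hcs : c ^ 2 + s ^ 2 = 1) : (c + s) ^ 2 ≤ 2 := by
  nlinarith [sq_nonneg (c - s)]

/- Multiplying the two inequalities gives `c s a² < c s (h² - v²)`, impossible as `h ≤ a`. -/
theorem false_of_corner {h a v c s : ℝ} (hh : 0 ≤ h) (ha : h ≤ a) (hc : 0 ≤ c) (hs : 0 ≤ s)
    (h₁ : a * c < (h - v) * s) (h₂ : a * s < (h + v) * c) : False := by
  have hprod := mul_lt_mul'' h₁ h₂ (mul_nonneg (hh.trans ha) hc) (mul_nonneg (hh.trans ha) hs)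
  have hsq := mul_le_mul_of_nonneg_left (mul_le_mul ha ha hh (hh.trans ha)) (mul_nonneg hc hs)
  nlinarith [mul_nonneg (mul_nonneg hc hs) (sq_nonneg v)]

/-- `S = [-h, h]²` and `T = {p | |X p| ≤ k ∧ |Y p| ≤ k}`, where `X p = (p 0 - b1) c - (p 1 - b2) s`
and `Y p = (p 0 - b1) s + (p 1 - b2) c`; the point `z` lies in both squares and no vertex of either
square lies in the other. -/
structure VertexFree (h k c s b1 b2 z1 z2 : ℝ) : Prop where
  h_pos : 0 < h
  k_pos : 0 < k
  sq_add_sq : c ^ 2 + s ^ 2 = 1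
  abs_z1 : |z1| ≤ h
  abs_z2 : |z2| ≤ h
  abs_Xz : |(z1 - b1) * c - (z2 - b2) * s| ≤ k
  abs_Yz : |(z1 - b1) * s + (z2 - b2) * c| ≤ k
  vertT_not_mem : ∀ σ τ : ℝ, σ ^ 2 = 1 → τ ^ 2 = 1 →
    ¬(|b1 + k * (σ * c + τ * s)| ≤ h ∧ |b2 + k * (-σ * s + τ * c)| ≤ h)
  vertS_not_mem : ∀ σ τ : ℝ, σ ^ 2 = 1 → τ ^ 2 = 1 →
    ¬(|(σ * h - b1) * c - (τ * h - b2) * s| ≤ k ∧ |(σ * h - b1) * s + (τ * h - b2) * c| ≤ k)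

namespace VertexFree

variable {h k c s b1 b2 z1 z2 : ℝ}

/- Symmetries: `rotateT` relabels the frame of `T` by a right angle, `neg` is the point reflection
in the centre of `S`, `rotateS` the rotation by a right angle about it, and `reflect` the
reflection in the horizontal axis. -/
theorem rotateT (C : VertexFree h k c s b1 b2 z1 z2) : VertexFree h k s (-c) b1 b2 z1 z2 := by
  obtain ⟨hh, hk, hcs, hz1, hz2, hXz, hYz, hT, hS⟩ := C
  refine ⟨hh, hk, by linear_combination hcs, hz1, hz2, by convert hYz using 2; ring,
    by rw [← abs_neg]; convert hXz using 2; ring, ?_, ?_⟩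
  · rintro σ τ hσ hτ ⟨h1, h2⟩
    exact hT (-τ) σ (by linear_combination hτ) hσ
      ⟨by convert h1 using 2; ring, by convert h2 using 2; ring⟩
  · rintro σ τ hσ hτ ⟨h1, h2⟩
    exact hS σ τ hσ hτ ⟨by rw [← abs_neg]; convert h2 using 2; ring, by convert h1 using 2; ring⟩

theorem neg (C : VertexFree h k c s b1 b2 z1 z2) :
    VertexFree h k (-c) (-s) (-b1) (-b2) (-z1) (-z2) := by
  obtain ⟨hh, hk, hcs, hz1, hz2, hXz, hYz, hT, hS⟩ := C
  refine ⟨hh, hk, by linear_combination hcs, by rwa [abs_neg], by rwa [abs_neg],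
    by convert hXz using 2; ring, by convert hYz using 2; ring, ?_, ?_⟩
  · rintro σ τ hσ hτ ⟨h1, h2⟩
    exact hT σ τ hσ hτ ⟨by rw [← abs_neg]; convert h1 using 2; ring,
      by rw [← abs_neg]; convert h2 using 2; ring⟩
  · rintro σ τ hσ hτ ⟨h1, h2⟩
    exact hS (-σ) (-τ) (by linear_combination hσ) (by linear_combination hτ)
      ⟨by convert h1 using 2; ring, by convert h2 using 2; ring⟩

theorem rotateS (C : VertexFree h k c s b1 b2 z1 z2) :
    VertexFree h k (-s) c b2 (-b1) z2 (-z1) := by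
  obtain ⟨hh, hk, hcs, hz1, hz2, hXz, hYz, hT, hS⟩ := C
  refine ⟨hh, hk, by linear_combination hcs, hz2, by rwa [abs_neg],
    by convert hXz using 2; ring, by convert hYz using 2; ring, ?_, ?_⟩
  · rintro σ τ hσ hτ ⟨h1, h2⟩
    exact hT σ τ hσ hτ ⟨by rw [← abs_neg]; convert h2 using 2; ring,
      by convert h1 using 2; ring⟩
  · rintro σ τ hσ hτ ⟨h1, h2⟩
    exact hS (-τ) σ (by linear_combination hτ) hσ
      ⟨by convert h1 using 2; ring, by convert h2 using 2; ring⟩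

theorem reflect (C : VertexFree h k c s b1 b2 z1 z2) : VertexFree h k s c b1 (-b2) z1 (-z2) := by
  obtain ⟨hh, hk, hcs, hz1, hz2, hXz, hYz, hT, hS⟩ := C
  refine ⟨hh, hk, by linear_combination hcs, hz1, by rwa [abs_neg],
    by convert hYz using 2; ring, by convert hXz using 2; ring, ?_, ?_⟩
  · rintro σ τ hσ hτ ⟨h1, h2⟩
    exact hT τ σ hτ hσ ⟨by convert h1 using 2; ring,
      by rw [← abs_neg]; convert h2 using 2; ring⟩
  · rintro σ τ hσ hτ ⟨h1, h2⟩
    exact hS σ (-τ) hσ (by linear_combination hτ)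
      ⟨by convert h2 using 2; ring, by convert h1 using 2; ring⟩

/-- The same configuration with the roles of `S` and `T` exchanged, in the frame of `T`. -/
theorem swap (C : VertexFree h k c s b1 b2 z1 z2) :
    VertexFree k h c (-s) (-b1 * c + b2 * s) (-b1 * s - b2 * c)
      ((z1 - b1) * c - (z2 - b2) * s) ((z1 - b1) * s + (z2 - b2) * c) := by
  obtain ⟨hh, hk, hcs, hz1, hz2, hXz, hYz, hT, hS⟩ := C
  refine ⟨hk, hh, by linear_combination hcs, hXz, hYz, ?_, ?_, ?_, ?_⟩
  · convert hz1 using 2; linear_combination z1 * hcs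
  · convert hz2 using 2; linear_combination z2 * hcs
  · rintro σ τ hσ hτ ⟨h1, h2⟩
    exact hS σ τ hσ hτ ⟨by convert h1 using 2; ring, by convert h2 using 2; ring⟩
  · rintro σ τ hσ hτ ⟨h1, h2⟩
    exact hT σ τ hσ hτ ⟨by convert h1 using 2; linear_combination -b1 * hcs,
      by convert h2 using 2; linear_combination -b2 * hcs⟩

/- A suffix `_στ` (with `p`, `m` for `σ, τ = 1, -1`) refers to the vertex `(σ h, τ h)` of `S` or to
the vertex `b + k (σ (c, -s) + τ (s, c))` of `T`: `cornerS_στ` says that the former is not in `T`,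
`cornerT_στ` that the latter is not in `S`. -/
theorem cornerS_pp (C : VertexFree h k c s b1 b2 z1 z2) :
    k < |(h - b1) * c - (h - b2) * s| ∨ k < |(h - b1) * s + (h - b2) * c| := by
  have H := C.vertS_not_mem 1 1 (one_pow 2) (one_pow 2)
  rw [not_and_or, not_le, not_le] at H
  simpa only [one_mul] using H

theorem cornerS_pm (C : VertexFree h k c s b1 b2 z1 z2) :
    k < |(h - b1) * c - (-h - b2) * s| ∨ k < |(h - b1) * s + (-h - b2) * c| := by
  have H := C.vertS_not_mem 1 (-1) (one_pow 2) neg_one_sq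
  rw [not_and_or, not_le, not_le] at H
  simpa only [one_mul, neg_one_mul] using H

theorem cornerS_mp (C : VertexFree h k c s b1 b2 z1 z2) :
    k < |(-h - b1) * c - (h - b2) * s| ∨ k < |(-h - b1) * s + (h - b2) * c| := by
  have H := C.vertS_not_mem (-1) 1 neg_one_sq (one_pow 2)
  rw [not_and_or, not_le, not_le] at H
  simpa only [one_mul, neg_one_mul] using H

theorem cornerS_mm (C : VertexFree h k c s b1 b2 z1 z2) :
    k < |(-h - b1) * c - (-h - b2) * s| ∨ k < |(-h - b1) * s + (-h - b2) * c| := by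
  have H := C.vertS_not_mem (-1) (-1) neg_one_sq neg_one_sq
  rw [not_and_or, not_le, not_le] at H
  simpa only [neg_one_mul] using H

theorem cornerT_mm (C : VertexFree h k c s b1 b2 z1 z2) :
    h < |b1 - k * (c + s)| ∨ h < |b2 + k * (s - c)| := by
  have H := C.vertT_not_mem (-1) (-1) neg_one_sq neg_one_sq
  rwa [not_and_or, not_le, not_le, show b1 + k * (-1 * c + -1 * s) = b1 - k * (c + s) by ring,
    show b2 + k * (- -1 * s + -1 * c) = b2 + k * (s - c) by ring] at H

theorem cornerT_pm (C : VertexFree h k c s b1 b2 z1 z2) :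
    h < |b1 + k * (c - s)| ∨ h < |b2 - k * (c + s)| := by
  have H := C.vertT_not_mem 1 (-1) (one_pow 2) neg_one_sq
  rwa [not_and_or, not_le, not_le, show b1 + k * (1 * c + -1 * s) = b1 + k * (c - s) by ring,
    show b2 + k * (-1 * s + -1 * c) = b2 - k * (c + s) by ring] at H

theorem cornerT_mp (C : VertexFree h k c s b1 b2 z1 z2) :
    h < |b1 + k * (s - c)| ∨ h < |b2 + k * (c + s)| := by
  have H := C.vertT_not_mem (-1) 1 neg_one_sq (one_pow 2)
  rwa [not_and_or, not_le, not_le, show b1 + k * (-1 * c + 1 * s) = b1 + k * (s - c) by ring,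
    show b2 + k * (- -1 * s + 1 * c) = b2 + k * (c + s) by ring] at H

section FirstQuadrant

variable (hc : 0 ≤ c) (hs : 0 ≤ s)
include hc hs

theorem z_bounds (C : VertexFree h k c s b1 b2 z1 z2) :
    b1 - k * (c + s) ≤ z1 ∧ z1 ≤ b1 + k * (c + s) ∧ b2 - k * (c + s) ≤ z2 ∧
      z2 ≤ b2 + k * (c + s) := by
  obtain ⟨hX₁, hX₂⟩ := abs_le.mp C.abs_Xz
  obtain ⟨hY₁, hY₂⟩ := abs_le.mp C.abs_Yz
  have e1 : c * ((z1 - b1) * c - (z2 - b2) * s) + s * ((z1 - b1) * s + (z2 - b2) * c)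
      = z1 - b1 := by
    linear_combination (z1 - b1) * C.sq_add_sq
  have e2 : -s * ((z1 - b1) * c - (z2 - b2) * s) + c * ((z1 - b1) * s + (z2 - b2) * c)
      = z2 - b2 := by
    linear_combination (z2 - b2) * C.sq_add_sq
  refine ⟨?_, ?_, ?_, ?_⟩ <;>
    nlinarith [mul_le_mul_of_nonneg_left hX₁ hc, mul_le_mul_of_nonneg_left hX₂ hc,
      mul_le_mul_of_nonneg_left hY₁ hs, mul_le_mul_of_nonneg_left hY₂ hs,
      mul_le_mul_of_nonneg_left hX₁ hs, mul_le_mul_of_nonneg_left hX₂ hs,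
      mul_le_mul_of_nonneg_left hY₁ hc, mul_le_mul_of_nonneg_left hY₂ hc]

theorem neg_le_Y_pp (C : VertexFree h k c s b1 b2 z1 z2) : -k ≤ (h - b1) * s + (h - b2) * c := by
  have := mul_nonneg (sub_nonneg.2 (abs_le.mp C.abs_z1).2) hs
  have := mul_nonneg (sub_nonneg.2 (abs_le.mp C.abs_z2).2) hc
  linarith [(abs_le.mp C.abs_Yz).1]

theorem neg_le_X_pm (C : VertexFree h k c s b1 b2 z1 z2) : -k ≤ (h - b1) * c - (-h - b2) * s := by
  have := mul_nonneg (sub_nonneg.2 (abs_le.mp C.abs_z1).2) hc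
  have := mul_nonneg (neg_le_iff_add_nonneg.1 (abs_le.mp C.abs_z2).1) hs
  linarith [(abs_le.mp C.abs_Xz).1]

theorem X_mp_le (C : VertexFree h k c s b1 b2 z1 z2) : (-h - b1) * c - (h - b2) * s ≤ k := by
  have := mul_nonneg (neg_le_iff_add_nonneg.1 (abs_le.mp C.abs_z1).1) hc
  have := mul_nonneg (sub_nonneg.2 (abs_le.mp C.abs_z2).2) hs
  linarith [(abs_le.mp C.abs_Xz).2]

theorem Y_mm_le (C : VertexFree h k c s b1 b2 z1 z2) : (-h - b1) * s + (-h - b2) * c ≤ k := by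
  have := mul_nonneg (neg_le_iff_add_nonneg.1 (abs_le.mp C.abs_z1).1) hs
  have := mul_nonneg (neg_le_iff_add_nonneg.1 (abs_le.mp C.abs_z2).1) hc
  linarith [(abs_le.mp C.abs_Yz).2]

/- From here on `h < b1`: the centre of `T` lies to the right of `S`. On `S`, `X` is extremal at
the corners `(-h, h)` and `(h, -h)`, and `Y` at `(-h, -h)` and `(h, h)`; so, e.g., `S` lies on the
inner side of the line `X = -k` ("within the left side" of `T`) iff `-k ≤ X (-h, h)`. -/
variable (hb1 : h < b1)
include hb1

theorem false_of_within_left_top (C : VertexFree h k c s b1 b2 z1 z2)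
    (hL : -k ≤ (-h - b1) * c - (h - b2) * s) (hT : (h - b1) * s + (h - b2) * c ≤ k) : False := by
  have hh := C.h_pos
  have hX_pp : k < (h - b1) * c - (h - b2) * s := by
    rcases C.cornerS_pp with hA | hA <;> rcases lt_abs.mp hA with hA | hA
    · exact hA
    · nlinarith [mul_nonneg hh.le hc]
    · linarith
    · linarith [C.neg_le_Y_pp hc hs]
  have hY_mp : (-h - b1) * s + (h - b2) * c < -k := by
    rcases C.cornerS_mp with hA | hA <;> rcases lt_abs.mp hA with hA | hA
    · linarith [C.X_mp_le hc hs]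
    · linarith
    · nlinarith [mul_nonneg hh.le hs]
    · linarith
  have hb1' : b1 - h ≤ k * (s - c) := by
    nlinarith [mul_le_mul_of_nonneg_right hX_pp.le hc,
      mul_le_mul_of_nonneg_right (C.neg_le_Y_pp hc hs) hs, C.sq_add_sq]
  have hb2 : b2 ≤ h + k * (c + s) := by
    linarith [(C.z_bounds hc hs).2.2.1, (abs_le.mp C.abs_z2).2]
  -- the vertex `(b1 + k (c - s), b2 - k (c + s))` of `T` is either in `S` or below it
  rcases le_or_gt (-h) (b2 - k * (c + s)) with hG | hG
  · have hV1 : -h ≤ b1 + k * (c - s) := by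
      by_contra! hV1
      have : (-h - b1) * s + (h - b2) * c + k
          = (-h - (b1 + k * (c - s))) * s + (h - (b2 - k * (c + s))) * c := by
        linear_combination -k * C.sq_add_sq
      nlinarith [mul_nonneg (by linarith : 0 ≤ -h - (b1 + k * (c - s))) hs,
        mul_nonneg (by linarith : 0 ≤ h - (b2 - k * (c + s))) hc]
    rcases C.cornerT_pm with H | H <;> rcases lt_abs.mp H with H | H <;> linarith
  · refine false_of_corner (a := h - (b2 - k * (c + s))) (v := b1 + k * (c - s)) hh.le
      (by linarith) hs hc ?_ ?_
    · linear_combination hX_pp + k * C.sq_add_sq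
    · linear_combination hY_mp + k * C.sq_add_sq

theorem false_of_within_right_bottom (C : VertexFree h k c s b1 b2 z1 z2)
    (hR : (h - b1) * c - (-h - b2) * s ≤ k) (hB : -k ≤ (-h - b1) * s + (-h - b2) * c) : False := by
  have hh := C.h_pos
  have hY_pm : k < (h - b1) * s + (-h - b2) * c := by
    rcases C.cornerS_pm with hA | hA <;> rcases lt_abs.mp hA with hA | hA
    · linarith
    · linarith [C.neg_le_X_pm hc hs]
    · exact hA
    · nlinarith [mul_nonneg hh.le hs]
  have hX_mm : (-h - b1) * c - (-h - b2) * s < -k := by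
    rcases C.cornerS_mm with hA | hA <;> rcases lt_abs.mp hA with hA | hA
    · nlinarith [mul_nonneg hh.le hc]
    · linarith
    · linarith [C.Y_mm_le hc hs]
    · linarith
  have hb1' : b1 - h ≤ k * (c - s) := by
    nlinarith [mul_le_mul_of_nonneg_right hY_pm.le hs,
      mul_le_mul_of_nonneg_right (C.neg_le_X_pm hc hs) hc, C.sq_add_sq]
  have hb2 : -h - k * (c + s) ≤ b2 := by
    linarith [(C.z_bounds hc hs).2.2.2, (abs_le.mp C.abs_z2).1]
  -- the vertex `(b1 + k (s - c), b2 + k (c + s))` of `T` is either in `S` or above it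
  rcases le_or_gt (b2 + k * (c + s)) h with hG | hG
  · have hV1 : -h ≤ b1 + k * (s - c) := by
      by_contra! hV1
      have : (-h - b1) * c - (-h - b2) * s + k
          = (-h - (b1 + k * (s - c))) * c - (-h - (b2 + k * (c + s))) * s := by
        linear_combination -k * C.sq_add_sq
      nlinarith [mul_nonneg (by linarith : 0 ≤ -h - (b1 + k * (s - c))) hc,
        mul_nonneg (by linarith : 0 ≤ h + (b2 + k * (c + s))) hs]
    rcases C.cornerT_mp with H | H <;> rcases lt_abs.mp H with H | H <;> linarith
  · refine false_of_corner (a := h + (b2 + k * (c + s))) (v := b1 + k * (s - c)) hh.le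
      (by linarith) hc hs ?_ ?_
    · linear_combination hY_pm + k * C.sq_add_sq
    · linear_combination hX_mm + k * C.sq_add_sq

theorem false_of_within_left_bottom (C : VertexFree h k c s b1 b2 z1 z2)
    (hL : -k ≤ (-h - b1) * c - (h - b2) * s) (hB : -k ≤ (-h - b1) * s + (-h - b2) * c) : False := by
  by_cases hR : (h - b1) * c - (-h - b2) * s ≤ k
  · exact C.false_of_within_right_bottom hc hs hb1 hR hB
  by_cases hT : (h - b1) * s + (h - b2) * c ≤ k
  · exact C.false_of_within_left_top hc hs hb1 hL hT
  rw [not_le] at hR hT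
  have hh := C.h_pos
  have hY_pm : -k ≤ (h - b1) * s + (-h - b2) * c := by nlinarith [mul_nonneg hh.le hs]
  have hX_pp : -k ≤ (h - b1) * c - (h - b2) * s := by nlinarith [mul_nonneg hh.le hc]
  have h₁ : k * (c - s) ≤ h - b1 := by
    nlinarith [mul_le_mul_of_nonneg_right hR.le hc, mul_le_mul_of_nonneg_right hY_pm hs,
      C.sq_add_sq]
  have h₂ : k * (s - c) ≤ h - b1 := by
    nlinarith [mul_le_mul_of_nonneg_right hT.le hs, mul_le_mul_of_nonneg_right hX_pp hc,
      C.sq_add_sq]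
  linarith

omit hb1 in
theorem false_of_within_right_top (C : VertexFree h k c s b1 b2 z1 z2)
    (hR : (h - b1) * c - (-h - b2) * s ≤ k) (hT : (h - b1) * s + (h - b2) * c ≤ k)
    (hV : b1 + h < k * (c + s) ∨ h < b2 + k * (s - c)) : False := by
  have hh := C.h_pos
  have hX_pp : (h - b1) * c - (h - b2) * s < -k := by
    rcases C.cornerS_pp with hA | hA <;> rcases lt_abs.mp hA with hA | hA
    · nlinarith [mul_nonneg hh.le hs]
    · linarith
    · linarith
    · linarith [C.neg_le_Y_pp hc hs]
  -- the vertex `(b1 - k (c + s), b2 + k (s - c))` of `T` lies to the left of or above `S`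
  rcases hV with hV | hV
  · have hY_pm : (h - b1) * s + (-h - b2) * c < -k := by
      rcases C.cornerS_pm with hA | hA <;> rcases lt_abs.mp hA with hA | hA
      · linarith
      · linarith [C.neg_le_X_pm hc hs]
      · nlinarith [mul_nonneg hh.le hc]
      · linarith
    refine false_of_corner (a := h - (b1 - k * (c + s))) (v := b2 + k * (s - c)) hh.le
      (by linarith) hc hs ?_ ?_
    · linear_combination hX_pp + k * C.sq_add_sq
    · linear_combination hY_pm + k * C.sq_add_sq
  · have : (h - b1) * c - (h - b2) * s + k
        = (h - (b1 - k * (c + s))) * c - (h - (b2 + k * (s - c))) * s := by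
      linear_combination -k * C.sq_add_sq
    nlinarith [mul_nonneg (by linarith [(C.z_bounds hc hs).1, (abs_le.mp C.abs_z1).2] :
        0 ≤ h - (b1 - k * (c + s))) hc, mul_nonneg (by linarith : 0 ≤ b2 + k * (s - c) - h) hs]

theorem false_of_narrow_of_left (C : VertexFree h k c s b1 b2 z1 z2)
    (hV : b1 + h < k * (c + s)) (hn : k < h * (c + s)) : False := by
  have := one_le_add_of_sq_add_sq hc hs C.sq_add_sq
  nlinarith [mul_lt_mul_of_pos_right hn (by linarith : (0 : ℝ) < c + s),
    mul_le_mul_of_nonneg_left (add_sq_le_two_of_sq_add_sq C.sq_add_sq) C.h_pos.le]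

theorem false_of_crosses_top_of_above (C : VertexFree h k c s b1 b2 z1 z2)
    (hV : h < b2 + k * (s - c)) (hT : k < (h - b1) * s + (h - b2) * c) : False := by
  have hk := C.k_pos
  nlinarith [mul_nonneg (by linarith : 0 ≤ b1 - h) hs,
    mul_le_mul_of_nonneg_right (by linarith : k * (c - s) ≤ b2 - h) hc,
    mul_le_mul_of_nonneg_left (two_mul_le_add_sq c s) hk.le, mul_nonneg hk.le (sq_nonneg c),
    C.sq_add_sq]

theorem false_of_narrow_of_above (C : VertexFree h k c s b1 b2 z1 z2)
    (hV : h < b2 + k * (s - c)) (hn : k < h * (c + s)) : False := by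
  have hh := C.h_pos
  have hk := C.k_pos
  have hcs := C.sq_add_sq
  have hk2h : k * (c + s) < 2 * h := by
    have := one_le_add_of_sq_add_sq hc hs hcs
    nlinarith [mul_lt_mul_of_pos_right hn (by linarith : (0 : ℝ) < c + s),
      mul_le_mul_of_nonneg_left (add_sq_le_two_of_sq_add_sq hcs) hh.le]
  obtain ⟨hz1, -, hz2, -⟩ := C.z_bounds hc hs
  have hz1' := (abs_le.mp C.abs_z1).2
  have hz2' := (abs_le.mp C.abs_z2).2
  rcases C.cornerS_pp with hA | hA <;> rcases lt_abs.mp hA with hA | hA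
  · rcases C.cornerT_pm with hB | hB <;> rcases lt_abs.mp hB with hB | hB
    · nlinarith [mul_le_mul_of_nonneg_right (by linarith : b2 - h ≤ k * (c + s)) hs,
        mul_le_mul_of_nonneg_right (by linarith : k * (s - c) ≤ b1 - h) hc]
    · nlinarith [mul_nonneg hk.le hc]
    · linarith
    · nlinarith [mul_nonneg (by linarith : 0 ≤ h - b2) hs, mul_nonneg (by linarith : 0 ≤ b1 - h) hc]
  · nlinarith [mul_le_mul_of_nonneg_right (by linarith : k * (c - s) ≤ b2 - h) hs,
      mul_le_mul_of_nonneg_right (by linarith : b1 - h ≤ k * (c + s)) hc]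
  · exact C.false_of_crosses_top_of_above hc hs hb1 hV hA
  · linarith [C.neg_le_Y_pp hc hs]

theorem false_of_vertex_left_or_above (C : VertexFree h k c s b1 b2 z1 z2)
    (hV : b1 + h < k * (c + s) ∨ h < b2 + k * (s - c)) : False := by
  have hLR : -k ≤ (-h - b1) * c - (h - b2) * s ∨ (h - b1) * c - (-h - b2) * s ≤ k := by
    by_contra! H
    rcases hV with hV | hV
    · exact C.false_of_narrow_of_left hc hs hb1 hV (by linarith)
    · exact C.false_of_narrow_of_above hc hs hb1 hV (by linarith)
  have hTB : (h - b1) * s + (h - b2) * c ≤ k ∨ -k ≤ (-h - b1) * s + (-h - b2) * c := by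
    by_contra! H
    rcases hV with hV | hV
    · exact C.false_of_narrow_of_left hc hs hb1 hV (by linarith)
    · exact C.false_of_crosses_top_of_above hc hs hb1 hV H.1
  rcases hLR with hL | hR <;> rcases hTB with hT | hB
  · exact C.false_of_within_left_top hc hs hb1 hL hT
  · exact C.false_of_within_left_bottom hc hs hb1 hL hB
  · exact C.false_of_within_right_top hc hs hR hT hV
  · exact C.false_of_within_right_bottom hc hs hb1 hR hB

omit hb1 in
theorem b1_le_of_nonneg (C : VertexFree h k c s b1 b2 z1 z2) : b1 ≤ h := by
  by_contra! hb1
  rcases C.cornerT_mm with H | H <;> rcases lt_abs.mp H with H | H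
  · linarith [(C.z_bounds hc hs).1, (abs_le.mp C.abs_z1).2]
  · exact C.false_of_vertex_left_or_above hc hs hb1 (Or.inl (by linarith))
  · exact C.false_of_vertex_left_or_above hc hs hb1 (Or.inr H)
  · exact C.reflect.false_of_vertex_left_or_above hs hc hb1 (Or.inr (by linarith))

end FirstQuadrant

theorem b1_le (C : VertexFree h k c s b1 b2 z1 z2) : b1 ≤ h := by
  rcases le_or_gt 0 c with hc | hc <;> rcases le_or_gt 0 s with hs | hs
  · exact C.b1_le_of_nonneg hc hs
  · exact C.rotateT.rotateT.rotateT.b1_le_of_nonneg (by linarith) (by linarith)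
  · exact C.rotateT.b1_le_of_nonneg hs (by linarith)
  · exact C.rotateT.rotateT.b1_le_of_nonneg (by linarith) (by linarith)

/-- Each square contains the centre of the other. -/
theorem centers_mem (C : VertexFree h k c s b1 b2 z1 z2) :
    |b1| ≤ h ∧ |b2| ≤ h ∧ |-b1 * c + b2 * s| ≤ k ∧ |-b1 * s - b2 * c| ≤ k := by
  have h1 := C.b1_le
  have h2 := C.neg.b1_le
  have h3 := C.rotateS.b1_le
  have h4 := C.rotateS.neg.b1_le
  have h5 := C.swap.b1_le
  have h6 := C.swap.neg.b1_le
  have h7 := C.swap.rotateS.b1_le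
  have h8 := C.swap.rotateS.neg.b1_le
  exact ⟨abs_le.mpr ⟨by linarith, h1⟩, abs_le.mpr ⟨by linarith, h3⟩,
    abs_le.mpr ⟨by linarith, h5⟩, abs_le.mpr ⟨by linarith, h7⟩⟩

end VertexFree

/-- For `σ, τ = ±1`, the vertex of `sqSet c θ s` at which `sqForm1 = σ s / 2` and
`sqForm2 = τ s / 2`. -/
def sqVertex (c : Pt) (θ s σ τ : ℝ) : Pt :=
  !₂[c 0 + (σ * Real.cos θ + τ * Real.sin θ) * (s / 2),
    c 1 + (σ * Real.sin θ - τ * Real.cos θ) * (s / 2)]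

@[simp]
theorem sqVertex_zero (c : Pt) (θ s σ τ : ℝ) :
    sqVertex c θ s σ τ 0 = c 0 + (σ * Real.cos θ + τ * Real.sin θ) * (s / 2) := rfl

@[simp]
theorem sqVertex_one (c : Pt) (θ s σ τ : ℝ) :
    sqVertex c θ s σ τ 1 = c 1 + (σ * Real.sin θ - τ * Real.cos θ) * (s / 2) := rfl

@[simp]
theorem sqForm1_self (c : Pt) (θ : ℝ) : sqForm1 c θ c = 0 := by simp [sqForm1]

@[simp]
theorem sqForm2_self (c : Pt) (θ : ℝ) : sqForm2 c θ c = 0 := by simp [sqForm2]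

@[simp]
theorem sqForm1_sqVertex (c : Pt) (θ s σ τ : ℝ) :
    sqForm1 c θ (sqVertex c θ s σ τ) = σ * (s / 2) := by
  simp only [sqForm1, sqVertex_zero, sqVertex_one]
  linear_combination σ * (s / 2) * Real.cos_sq_add_sin_sq θ

@[simp]
theorem sqForm2_sqVertex (c : Pt) (θ s σ τ : ℝ) :
    sqForm2 c θ (sqVertex c θ s σ τ) = τ * (s / 2) := by
  simp only [sqForm2, sqVertex_zero, sqVertex_one]
  linear_combination τ * (s / 2) * Real.sin_sq_add_cos_sq θ

theorem coord_zero_eq (c : Pt) (θ : ℝ) (x : Pt) :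
    x 0 = c 0 + sqForm1 c θ x * Real.cos θ + sqForm2 c θ x * Real.sin θ := by
  simp only [sqForm1, sqForm2]
  linear_combination (c 0 - x 0) * Real.cos_sq_add_sin_sq θ

theorem coord_one_eq (c : Pt) (θ : ℝ) (x : Pt) :
    x 1 = c 1 + sqForm1 c θ x * Real.sin θ - sqForm2 c θ x * Real.cos θ := by
  simp only [sqForm1, sqForm2]
  linear_combination (c 1 - x 1) * Real.cos_sq_add_sin_sq θ

theorem eq_of_sqForm_eq {c x y : Pt} {θ : ℝ} (h₁ : sqForm1 c θ x = sqForm1 c θ y)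
    (h₂ : sqForm2 c θ x = sqForm2 c θ y) : x = y := by
  ext i
  fin_cases i
  · show x 0 = y 0
    rw [coord_zero_eq c θ x, coord_zero_eq c θ y, h₁, h₂]
  · show x 1 = y 1
    rw [coord_one_eq c θ x, coord_one_eq c θ y, h₁, h₂]

theorem sqForm1_change_frame (a : Pt) (α : ℝ) (b : Pt) (β : ℝ) (x : Pt) :
    sqForm1 b β x = (sqForm1 a α x - sqForm1 a α b) * Real.cos (α - β)
      - (sqForm2 a α x - sqForm2 a α b) * Real.sin (β - α) := by
  simp only [sqForm1, sqForm2, Real.cos_sub, Real.sin_sub]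
  linear_combination (-(Real.cos β * (x 0 - b 0) + Real.sin β * (x 1 - b 1)))
    * Real.sin_sq_add_cos_sq α

theorem sqForm2_change_frame (a : Pt) (α : ℝ) (b : Pt) (β : ℝ) (x : Pt) :
    sqForm2 b β x = (sqForm1 a α x - sqForm1 a α b) * Real.sin (β - α)
      + (sqForm2 a α x - sqForm2 a α b) * Real.cos (α - β) := by
  simp only [sqForm1, sqForm2, Real.cos_sub, Real.sin_sub]
  linear_combination (-(Real.sin β * (x 0 - b 0) - Real.cos β * (x 1 - b 1)))
    * Real.sin_sq_add_cos_sq α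

theorem sqForm1_sqVertex_change_frame (a : Pt) (α : ℝ) (b : Pt) (β s σ τ : ℝ) :
    sqForm1 a α (sqVertex b β s σ τ)
      = sqForm1 a α b + s / 2 * (σ * Real.cos (α - β) + τ * Real.sin (β - α)) := by
  simp only [sqForm1, sqVertex_zero, sqVertex_one, Real.cos_sub, Real.sin_sub]
  ring

theorem sqForm2_sqVertex_change_frame (a : Pt) (α : ℝ) (b : Pt) (β s σ τ : ℝ) :
    sqForm2 a α (sqVertex b β s σ τ)
      = sqForm2 a α b + s / 2 * (-σ * Real.sin (β - α) + τ * Real.cos (α - β)) := by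
  simp only [sqForm2, sqVertex_zero, sqVertex_one, Real.cos_sub, Real.sin_sub]
  ring

theorem sqVertex_mem_or_centers_mem {a b : Pt} {α β sa sb : ℝ} (ha : 0 < sa) (hb : 0 < sb)
    (hab : (sqSet a α sa ∩ sqSet b β sb).Nonempty) :
    (∃ σ τ : ℝ, σ ^ 2 = 1 ∧ τ ^ 2 = 1 ∧ sqVertex a α sa σ τ ∈ sqSet b β sb) ∨
      (∃ σ τ : ℝ, σ ^ 2 = 1 ∧ τ ^ 2 = 1 ∧ sqVertex b β sb σ τ ∈ sqSet a α sa) ∨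
      (a ∈ sqSet b β sb ∧ b ∈ sqSet a α sa) := by
  by_contra! H
  obtain ⟨hvS, hvT, hctr⟩ := H
  obtain ⟨z, ⟨hza1, hza2⟩, hzb1, hzb2⟩ := hab
  rw [sqForm1_change_frame a α] at hzb1
  rw [sqForm2_change_frame a α] at hzb2
  have C : VertexFree (sa / 2) (sb / 2) (Real.cos (α - β)) (Real.sin (β - α))
      (sqForm1 a α b) (sqForm2 a α b) (sqForm1 a α z) (sqForm2 a α z) := by
    refine ⟨by positivity, by positivity, ?_, hza1, hza2, hzb1, hzb2, ?_, ?_⟩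
    · rw [← Real.cos_neg, neg_sub, Real.cos_sq_add_sin_sq]
    · rintro σ τ hσ hτ ⟨h1, h2⟩
      refine hvT σ τ hσ hτ ⟨?_, ?_⟩
      · rwa [sqForm1_sqVertex_change_frame a α]
      · rwa [sqForm2_sqVertex_change_frame a α]
    · rintro σ τ hσ hτ ⟨h1, h2⟩
      refine hvS σ τ hσ hτ ⟨?_, ?_⟩
      · rwa [sqForm1_change_frame a α, sqForm1_sqVertex, sqForm2_sqVertex]
      · rwa [sqForm2_change_frame a α, sqForm1_sqVertex, sqForm2_sqVertex]
  obtain ⟨h1, h2, h3, h4⟩ := C.centers_mem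
  refine hctr ⟨?_, ?_⟩ ⟨h1, h2⟩
  · rw [sqForm1_change_frame a α, sqForm1_self, sqForm2_self]
    convert h3 using 2; ring
  · rw [sqForm2_change_frame a α, sqForm1_self, sqForm2_self]
    convert h4 using 2; ring

theorem sqVertex_mem_sqSet {c : Pt} {θ s σ τ : ℝ} (hs : 0 ≤ s) (hσ : σ ^ 2 = 1) (hτ : τ ^ 2 = 1) :
    sqVertex c θ s σ τ ∈ sqSet c θ s := by
  have habs : ∀ ρ : ℝ, ρ ^ 2 = 1 → |ρ * (s / 2)| = s / 2 := fun ρ hρ => by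
    rw [abs_mul, abs_of_nonneg (by positivity : 0 ≤ s / 2)]
    rcases sq_eq_one_iff.1 hρ with rfl | rfl <;> simp
  exact ⟨by rw [sqForm1_sqVertex, habs σ hσ], by rw [sqForm2_sqVertex, habs τ hτ]⟩

/-- Centre, angle and side of a square, chosen once and for all (junk values for other sets). -/
def squareData (S : Set Pt) : Pt × ℝ × ℝ :=
  if h : IsSquareSet S then (h.choose, h.choose_spec.choose, h.choose_spec.choose_spec.choose)
  else (0, 0, 0)

def center (S : Set Pt) : Pt := (squareData S).1

def angle (S : Set Pt) : ℝ := (squareData S).2.1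

def side (S : Set Pt) : ℝ := (squareData S).2.2

def vertices (S : Set Pt) : Finset Pt :=
  {sqVertex (center S) (angle S) (side S) 1 1, sqVertex (center S) (angle S) (side S) 1 (-1),
    sqVertex (center S) (angle S) (side S) (-1) 1, sqVertex (center S) (angle S) (side S) (-1) (-1)}

theorem card_vertices_le (S : Set Pt) : #(vertices S) ≤ 4 := card_le_four

theorem sqVertex_mem_vertices (S : Set Pt) {σ τ : ℝ} (hσ : σ ^ 2 = 1) (hτ : τ ^ 2 = 1) :
    sqVertex (center S) (angle S) (side S) σ τ ∈ vertices S := by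
  rcases sq_eq_one_iff.1 hσ with rfl | rfl <;> rcases sq_eq_one_iff.1 hτ with rfl | rfl <;>
    simp [vertices]

theorem side_pos_and_eq {S : Set Pt} (hS : IsSquareSet S) :
    0 < side S ∧ S = sqSet (center S) (angle S) (side S) := by
  simpa only [side, center, angle, squareData, dif_pos hS] using
    hS.choose_spec.choose_spec.choose_spec

theorem mem_iff_mem_sqSet {S : Set Pt} (hS : IsSquareSet S) {x : Pt} :
    x ∈ S ↔ x ∈ sqSet (center S) (angle S) (side S) :=
  Set.ext_iff.mp (side_pos_and_eq hS).2 x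

theorem center_mem {S : Set Pt} (hS : IsSquareSet S) : center S ∈ S :=
  (mem_iff_mem_sqSet hS).2 (by simp [sqSet, (side_pos_and_eq hS).1.le, div_nonneg])

theorem mem_of_mem_vertices {S : Set Pt} (hS : IsSquareSet S) {v : Pt} (hv : v ∈ vertices S) :
    v ∈ S := by
  simp only [vertices, mem_insert, mem_singleton] at hv
  rcases hv with rfl | rfl | rfl | rfl <;>
    exact (mem_iff_mem_sqSet hS).2
      (sqVertex_mem_sqSet (side_pos_and_eq hS).1.le (by norm_num) (by norm_num))

theorem crossing {S T : Set Pt} (hS : IsSquareSet S) (hT : IsSquareSet T) (hST : (S ∩ T).Nonempty) :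
    (∃ v ∈ vertices S, v ∈ T) ∨ (∃ v ∈ vertices T, v ∈ S) ∨ (center S ∈ T ∧ center T ∈ S) := by
  obtain ⟨z, hzS, hzT⟩ := hST
  rcases sqVertex_mem_or_centers_mem (side_pos_and_eq hS).1 (side_pos_and_eq hT).1
      ⟨z, (mem_iff_mem_sqSet hS).1 hzS, (mem_iff_mem_sqSet hT).1 hzT⟩ with
    ⟨σ, τ, hσ, hτ, hv⟩ | ⟨σ, τ, hσ, hτ, hv⟩ | ⟨hST, hTS⟩
  · exact Or.inl ⟨_, sqVertex_mem_vertices S hσ hτ, (mem_iff_mem_sqSet hT).2 hv⟩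
  · exact Or.inr (Or.inl ⟨_, sqVertex_mem_vertices T hσ hτ, (mem_iff_mem_sqSet hS).2 hv⟩)
  · exact Or.inr (Or.inr ⟨(mem_iff_mem_sqSet hT).2 hST, (mem_iff_mem_sqSet hS).2 hTS⟩)

def height (ε : ℝ) (p : Pt) : ℝ := p 1 + ε * p 0

theorem height_eq (ε : ℝ) (c : Pt) (θ : ℝ) (x : Pt) :
    height ε x = height ε c + sqForm1 c θ x * (Real.sin θ + ε * Real.cos θ)
      + sqForm2 c θ x * (ε * Real.sin θ - Real.cos θ) := by
  rw [height, height, coord_zero_eq c θ x, coord_one_eq c θ x]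
  ring

theorem exists_sq_eq_one_forall_mul_le {L : ℝ} (hL : L ≠ 0) (r : ℝ) :
    ∃ σ : ℝ, σ ^ 2 = 1 ∧ ∀ F : ℝ, |F| ≤ r → σ * r * L ≤ F * L := by
  rcases hL.lt_or_gt with hL | hL
  · exact ⟨1, one_pow 2, fun F hF => by nlinarith [(abs_le.1 hF).2]⟩
  · exact ⟨-1, neg_one_sq, fun F hF => by nlinarith [(abs_le.1 hF).1]⟩

theorem exists_sqVertex_height_lt {ε θ : ℝ} (c : Pt) (s : ℝ)
    (h₁ : Real.sin θ + ε * Real.cos θ ≠ 0) (h₂ : ε * Real.sin θ - Real.cos θ ≠ 0) :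
    ∃ σ τ : ℝ, σ ^ 2 = 1 ∧ τ ^ 2 = 1 ∧ ∀ x ∈ sqSet c θ s, x ≠ sqVertex c θ s σ τ →
      height ε (sqVertex c θ s σ τ) < height ε x := by
  obtain ⟨σ, hσ, hσF⟩ := exists_sq_eq_one_forall_mul_le h₁ (s / 2)
  obtain ⟨τ, hτ, hτF⟩ := exists_sq_eq_one_forall_mul_le h₂ (s / 2)
  refine ⟨σ, τ, hσ, hτ, fun x ⟨hx₁, hx₂⟩ hne => ?_⟩
  rw [height_eq ε c θ x, height_eq ε c θ (sqVertex c θ s σ τ), sqForm1_sqVertex, sqForm2_sqVertex]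
  have h₁' := hσF _ hx₁
  have h₂' := hτF _ hx₂
  by_contra! hle
  refine hne (eq_of_sqForm_eq (c := c) (θ := θ) ?_ ?_)
  · rw [sqForm1_sqVertex]
    exact mul_right_cancel₀ h₁ (by linarith)
  · rw [sqForm2_sqVertex]
    exact mul_right_cancel₀ h₂ (by linarith)

theorem exists_forall_fst_add_mul_snd_ne_zero (P : Finset (ℝ × ℝ)) (hP : ∀ p ∈ P, p ≠ 0) :
    ∃ ε : ℝ, ∀ p ∈ P, p.1 + ε * p.2 ≠ 0 := by
  obtain ⟨ε, hε⟩ := Infinite.exists_notMem_finset (P.image fun p => -p.1 / p.2)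
  refine ⟨ε, fun p hp h => ?_⟩
  rcases eq_or_ne p.2 0 with h2 | h2
  · exact hP p hp (Prod.ext (by simpa [h2] using h) h2)
  · exact hε (mem_image.2 ⟨p, hp, by field_simp; linarith⟩)

theorem exists_generic_slope (F : Finset (Set Pt)) :
    ∃ ε : ℝ, ∀ S ∈ F, Real.sin (angle S) + ε * Real.cos (angle S) ≠ 0 ∧
      ε * Real.sin (angle S) - Real.cos (angle S) ≠ 0 := by
  obtain ⟨ε, hε⟩ := exists_forall_fst_add_mul_snd_ne_zero
    (F.image (fun S => (Real.sin (angle S), Real.cos (angle S))) ∪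
      F.image (fun S => (-Real.cos (angle S), Real.sin (angle S)))) (by
    intro p hp hp0
    simp only [mem_union, mem_image] at hp
    rcases hp with ⟨S, -, rfl⟩ | ⟨S, -, rfl⟩ <;>
      simp only [Prod.ext_iff, Prod.fst_zero, Prod.snd_zero] at hp0 <;>
      nlinarith [Real.sin_sq_add_cos_sq (angle S)])
  refine ⟨ε, fun S hS => ⟨hε _ (mem_union_left _ (mem_image_of_mem _ hS)), fun h => ?_⟩⟩
  exact hε _ (mem_union_right _ (mem_image_of_mem _ hS)) (by simp only; linarith)

/-- `q` is the lowest vertex of the family in a direction generic for all the squares. -/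
theorem exists_extreme_vertex {F : Finset (Set Pt)} (hne : F.Nonempty)
    (hsq : ∀ S ∈ F, IsSquareSet S) :
    ∃ X ∈ F, ∃ q ∈ vertices X, ∀ T ∈ F, q ∈ T → q ∈ vertices T := by
  obtain ⟨ε, hε⟩ := exists_generic_slope F
  have H : ∀ S ∈ F, ∃ v ∈ vertices S, ∀ x ∈ S, x ≠ v → height ε v < height ε x := by
    intro S hS
    obtain ⟨σ, τ, hσ, hτ, hmin⟩ :=
      exists_sqVertex_height_lt (center S) (side S) (hε S hS).1 (hε S hS).2
    refine ⟨_, sqVertex_mem_vertices S hσ hτ, fun x hx => hmin x ?_⟩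
    exact (mem_iff_mem_sqSet (hsq S hS)).1 hx
  choose! v hv hmin using H
  obtain ⟨X, hX, hXmin⟩ := F.exists_min_image (fun S => height ε (v S)) hne
  refine ⟨X, hX, v X, hv X hX, fun T hT hqT => ?_⟩
  by_contra hq
  exact (hmin T hT _ hqT fun h => hq (h ▸ hv T hT)).not_ge (hXmin T hT)

theorem card_filter_mem_le_maxDeg {C F : Finset (Set Pt)} (hF : F ⊆ C) (p : Pt) :
    #(F.filter (p ∈ ·)) ≤ maxDeg C := by
  refine (card_le_card (filter_subset_filter _ hF)).trans (le_csSup ⟨#C, ?_⟩ ⟨p, rfl⟩)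
  rintro n ⟨q, rfl⟩
  exact card_filter_le _ _

def neighbors (F : Finset (Set Pt)) (S : Set Pt) : Finset (Set Pt) :=
  F.filter fun T => T ≠ S ∧ (T ∩ S).Nonempty

theorem sum_sum_neighbors_comm (F : Finset (Set Pt)) (f : Set Pt → Set Pt → ℕ) :
    ∑ S ∈ F, ∑ T ∈ neighbors F S, f T S = ∑ S ∈ F, ∑ T ∈ neighbors F S, f S T := by
  refine sum_comm' fun S T => ?_
  simp only [neighbors, mem_filter]
  constructor
  · rintro ⟨hS, hT, hne, hTS⟩
    exact ⟨⟨hS, hne.symm, Set.inter_comm T S ▸ hTS⟩, hT⟩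
  · rintro ⟨⟨hS, hne, hST⟩, hT⟩
    exact ⟨hS, hT, hne.symm, Set.inter_comm S T ▸ hST⟩

def weight (S T : Set Pt) : ℕ :=
  2 * #((vertices S).filter (· ∈ T)) + if center S ∈ T then 1 else 0

theorem two_le_weight {S T : Set Pt} {v : Pt} (hv : v ∈ vertices S) (hvT : v ∈ T) :
    2 ≤ weight S T := by
  have : 0 < #((vertices S).filter (· ∈ T)) := card_pos.2 ⟨v, mem_filter.2 ⟨hv, hvT⟩⟩
  unfold weight
  omega

theorem two_le_weight_add_weight {S T : Set Pt} (hS : IsSquareSet S) (hT : IsSquareSet T)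
    (hST : (S ∩ T).Nonempty) : 2 ≤ weight S T + weight T S := by
  rcases crossing hS hT hST with ⟨v, hv, hvT⟩ | ⟨v, hv, hvS⟩ | ⟨hST, hTS⟩
  · linarith [two_le_weight hv hvT]
  · linarith [two_le_weight hv hvS]
  · simp only [weight, if_pos hST, if_pos hTS]
    omega

theorem sum_weight_eq (S : Set Pt) (A : Finset (Set Pt)) :
    ∑ T ∈ A, weight S T
      = 2 * ∑ v ∈ vertices S, #(A.filter (v ∈ ·)) + #(A.filter (center S ∈ ·)) := by
  simp only [weight, sum_add_distrib, ← mul_sum, card_filter]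
  rw [sum_comm]

section Depth

variable {F : Finset (Set Pt)} {d : ℕ} (hdepth : ∀ p, #(F.filter (p ∈ ·)) ≤ d + 1)
include hdepth

theorem card_filter_mem_neighbors_le {S : Set Pt} (hS : S ∈ F) {p : Pt} (hp : p ∈ S) :
    #((neighbors F S).filter (p ∈ ·)) ≤ d := by
  have hsub : (neighbors F S).filter (p ∈ ·) ⊆ (F.filter (p ∈ ·)).erase S := by
    intro T hT
    simp only [neighbors, mem_filter, mem_erase] at hT ⊢
    exact ⟨hT.1.2.1, hT.1.1, hT.2⟩
  have := card_le_card hsub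
  rw [card_erase_of_mem (mem_filter.2 ⟨hS, hp⟩)] at this
  have := hdepth p
  omega

variable {S : Set Pt} (hS : S ∈ F) (hsq : IsSquareSet S)
include hS hsq

theorem sum_weight_neighbors_le {q : Pt} (hq : q ∈ vertices S) :
    ∑ T ∈ neighbors F S, weight S T ≤ 7 * d + 2 * #((neighbors F S).filter (q ∈ ·)) := by
  have hle : ∀ v ∈ S, #((neighbors F S).filter (v ∈ ·)) ≤ d := fun v hv =>
    card_filter_mem_neighbors_le hdepth hS hv
  have hrest : ∑ v ∈ (vertices S).erase q, #((neighbors F S).filter (v ∈ ·)) ≤ 3 * d := by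
    refine (sum_le_sum fun v hv => hle v (mem_of_mem_vertices hsq (mem_of_mem_erase hv))).trans ?_
    rw [sum_const, smul_eq_mul, card_erase_of_mem hq]
    exact Nat.mul_le_mul_right d (by have := card_vertices_le S; omega)
  rw [sum_weight_eq, ← add_sum_erase _ _ hq]
  have := hle _ (center_mem hsq)
  omega

theorem sum_weight_neighbors_le_nine_mul :
    ∑ T ∈ neighbors F S, weight S T ≤ 9 * d := by
  have hq := sqVertex_mem_vertices S (one_pow 2) (one_pow 2)
  have := sum_weight_neighbors_le hdepth hS hsq hq
  have := card_filter_mem_neighbors_le hdepth hS (mem_of_mem_vertices hsq hq)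
  omega

end Depth


section Family

variable {F : Finset (Set Pt)} (hsq : ∀ S ∈ F, IsSquareSet S)
include hsq

theorem sum_sum_weight_add_le {d : ℕ} (hdepth : ∀ p, #(F.filter (p ∈ ·)) ≤ d + 1) {X : Set Pt}
    (hX : X ∈ F) {q : Pt} (hqX : q ∈ vertices X) :
    ∑ S ∈ F, ∑ T ∈ neighbors F S, weight S T + 2 * d
      ≤ ∑ _S ∈ F, 9 * d + 2 * #((neighbors F X).filter (q ∈ ·)) := by
  rw [← add_sum_erase _ _ hX, ← add_sum_erase _ _ hX]
  have := sum_weight_neighbors_le hdepth hX (hsq X hX) hqX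
  have := sum_le_sum (s := F.erase X) fun S hS => sum_weight_neighbors_le_nine_mul hdepth
    (mem_of_mem_erase hS) (hsq S (mem_of_mem_erase hS))
  omega

theorem two_le_weight_add_weight_of_mem_neighbors {S T : Set Pt} (hS : S ∈ F)
    (hT : T ∈ neighbors F S) : 2 ≤ weight S T + weight T S :=
  two_le_weight_add_weight (hsq S hS) (hsq T (mem_filter.1 hT).1)
    (Set.inter_comm T S ▸ (mem_filter.1 hT).2.2)

theorem two_mul_card_add_le_sum_weight {X : Set Pt} (hX : X ∈ F) {q : Pt} (hqX : q ∈ vertices X)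
    (hq : ∀ T ∈ F, q ∈ T → q ∈ vertices T) :
    2 * #(neighbors F X) + 2 * #((neighbors F X).filter (q ∈ ·))
      ≤ ∑ T ∈ neighbors F X, (weight X T + weight T X) := by
  have hpair : ∀ T ∈ neighbors F X, 2 + 2 * (if q ∈ T then 1 else 0) ≤ weight X T + weight T X := by
    intro T hT
    split_ifs with hqT
    · have := two_le_weight hqX hqT
      have := two_le_weight (hq T (mem_filter.1 hT).1 hqT) (mem_of_mem_vertices (hsq X hX) hqX)
      omega
    · simpa using two_le_weight_add_weight_of_mem_neighbors hsq hX hT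
  refine le_of_eq_of_le ?_ (sum_le_sum hpair)
  rw [sum_add_distrib, sum_const, smul_eq_mul, ← mul_sum, ← card_filter]
  ring

theorem two_mul_sum_card_add_le {X : Set Pt} (hX : X ∈ F) {q : Pt} (hqX : q ∈ vertices X)
    (hq : ∀ T ∈ F, q ∈ T → q ∈ vertices T) :
    2 * ∑ S ∈ F, #(neighbors F S) + 2 * #((neighbors F X).filter (q ∈ ·))
      ≤ 2 * ∑ S ∈ F, ∑ T ∈ neighbors F S, weight S T := by
  have hrow : ∀ S ∈ F,
      2 * #(neighbors F S) + (if S = X then 2 * #((neighbors F X).filter (q ∈ ·)) else 0)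
        ≤ ∑ T ∈ neighbors F S, (weight S T + weight T S) := by
    intro S hS
    split_ifs with hSX
    · subst hSX
      exact two_mul_card_add_le_sum_weight hsq hS hqX hq
    · simpa [mul_comm] using card_nsmul_le_sum _ _ 2
        fun T hT => two_le_weight_add_weight_of_mem_neighbors hsq hS hT
  calc _ = ∑ S ∈ F, (2 * #(neighbors F S)
        + if S = X then 2 * #((neighbors F X).filter (q ∈ ·)) else 0) := by
        rw [sum_add_distrib, sum_ite_eq' F X, if_pos hX, mul_sum]
    _ ≤ ∑ S ∈ F, ∑ T ∈ neighbors F S, (weight S T + weight T S) := sum_le_sum hrow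
    _ = 2 * ∑ S ∈ F, ∑ T ∈ neighbors F S, weight S T := by
        simp only [sum_add_distrib]
        rw [sum_sum_neighbors_comm]
        ring

/- Both bounds on `∑ S, ∑ T ∈ neighbors F S, weight S T` are sharpened by the `r` members other
than `X` containing the extreme vertex `q`: the upper bound `9 d` per member loses `2 (d - r)` in
the row of `X`, and the lower bound gains `2 r` from the pairs meeting at `q`. -/
theorem exists_card_neighbors_lt (hne : F.Nonempty) {d : ℕ} (hd : 1 ≤ d)
    (hdepth : ∀ p, #(F.filter (p ∈ ·)) ≤ d + 1) : ∃ S ∈ F, #(neighbors F S) < 9 * d := by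
  by_contra! hdeg
  obtain ⟨X, hX, q, hqX, hq⟩ := exists_extreme_vertex hne hsq
  have := card_filter_mem_neighbors_le hdepth hX (mem_of_mem_vertices (hsq X hX) hqX)
  have := sum_sum_weight_add_le hsq hdepth hX hqX
  have := two_mul_sum_card_add_le hsq hX hqX hq
  have := sum_le_sum hdeg
  omega

end Family

theorem famDeg_of_squares {C : Finset (Set Pt)} (hsq : ∀ S ∈ C, IsSquareSet S)
    (hΔ : 2 ≤ maxDeg C) : FamDeg (9 * (maxDeg C - 1) - 1) C := by
  intro F hF hne
  obtain ⟨S, hS, hlt⟩ := exists_card_neighbors_lt (fun S hS => hsq S (hF hS)) hne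
    (d := maxDeg C - 1) (by omega) fun p => by have := card_filter_mem_le_maxDeg hF p; omega
  exact ⟨S, hS, Nat.le_sub_one_of_lt hlt⟩

theorem FamDeg.mono {D : ℕ} {F F' : Finset (Set Pt)} (h : FamDeg D F) (hF : F' ⊆ F) :
    FamDeg D F' :=
  fun F'' hF'' hne => h F'' (hF''.trans hF) hne

theorem exists_coloring_of_famDeg {D : ℕ} {F : Finset (Set Pt)} (hF : FamDeg D F) :
    ∃ col : Set Pt → ℕ, (∀ S ∈ F, col S < D + 1) ∧
      ∀ S ∈ F, ∀ T ∈ F, S ≠ T → (S ∩ T).Nonempty → col S ≠ col T := by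
  induction F using Finset.strongInduction with
  | H F ih =>
  rcases F.eq_empty_or_nonempty with rfl | hne
  · exact ⟨fun _ => 0, by simp, by simp⟩
  obtain ⟨S, hS, hdeg⟩ := hF F subset_rfl hne
  obtain ⟨col, hlt, hproper⟩ := ih _ (erase_ssubset hS) (FamDeg.mono hF (erase_subset S F))
  obtain ⟨c, hc, hfree⟩ : ∃ c ∈ range (D + 1), c ∉ (neighbors F S).image col := by
    by_contra! H
    have := (card_le_card H).trans card_image_le
    rw [card_range] at this
    exact absurd (this.trans hdeg) (by omega)
  refine ⟨fun T => if T = S then c else col T, fun T hT => ?_, fun A hA B hB hAB hint => ?_⟩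
  · dsimp only
    split_ifs with hTS
    · exact mem_range.1 hc
    · exact hlt T (mem_erase.2 ⟨hTS, hT⟩)
  · have hnbr : ∀ {U V}, U ∈ F → V ≠ U → (V ∩ U).Nonempty → V = S → col U ≠ c := by
      rintro U V hU hVU hUV rfl hcol
      exact hfree (mem_image.2 ⟨U, mem_filter.2 ⟨hU, hVU.symm, Set.inter_comm V U ▸ hUV⟩, hcol⟩)
    dsimp only
    split_ifs with hAS hBS hBS
    · exact absurd (hAS.trans hBS.symm) hAB
    · exact (hnbr hB hAB hint hAS).symm
    · exact hnbr hA (Ne.symm hAB) (Set.inter_comm A B ▸ hint) hBS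
    · exact hproper A (mem_erase.2 ⟨hAS, hA⟩) B (mem_erase.2 ⟨hBS, hB⟩) hAB hint

theorem chromNum_le_of_famDeg {D : ℕ} {F : Finset (Set Pt)} (hF : FamDeg D F) :
    chromNum F ≤ D + 1 :=
  Nat.sInf_le (exists_coloring_of_famDeg hF)

end Squares

theorem stmt_18 (C : Finset (Set Pt)) (h : ∀ S ∈ C, IsSquareSet S) (hΔ : 2 ≤ maxDeg C) :
    FamDeg (9 * (maxDeg C - 1) - 1) C ∧ chromNum C ≤ 9 * (maxDeg C - 1) := by
  have hdeg := Squares.famDeg_of_squares h hΔ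
  refine ⟨hdeg, ?_⟩
  have := Squares.chromNum_le_of_famDeg hdeg
  omega
end
end
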